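/- arXiv:1112.1389 — 6 statements merged into one kernel-verified Lean document; each statement's English description precedes it below -/
import Mathlib

section
/- Let p be a prime, n a nonnegative integer, G a finite group, and P a Sylow p-subgroup of G. If P has nilpotence class at most n(p-1)+1, then ℧ⁿ(Z(P)) is strongly closed in P with respect to G. -/
/-!
The heart of the proof: if `x ∈ P` and `x = w ^ p ^ n` with `w` central in `T = C_P(x)`, then `x`
is central in `P`. Otherwise some `y ∈ N_P(T) \ T` has `y ^ p ∈ T`, and conjugation by `y` is an
automorphism `σ` of the abelian group `Z(T)` with `σ ^ p = 1` and `(σ - 1) ^ (n(p-1)+1) = 0`, the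
latter by the class bound. From `(1 + t) ^ p = 1` the binomial theorem gives `p t = t ^ p v` with
`v` a unit, hence `p ^ n t ∈ (t ^ (n(p-1)+1)) = 0` for `t = σ - 1`, and `y` centralizes
`w ^ p ^ n = x`.

In general `x = u ^ p ^ n` with `u` central in some Sylow subgroup `Q` of a subgroup `H`, and `x`
lies in another Sylow subgroup `P` of `H`; one shows `x ∈ Z(P)` by induction on `|H|` and on
`|C_P(x)|`. If `H` normalizes `T = C_P(x)`, then `T` is a Sylow subgroup of `C_H(Z(T))`, and
conjugating `u` into `Z(T)` reduces to the case above. Otherwise, comparing Sylow subgroups of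
`N_H(T)` yields a Sylow subgroup of `H` in which `x` has a larger centralizer; by induction `x` is
a `p ^ n`-th power of a central element there, and the induction hypothesis for `N_H(T)` then makes
`N_P(T)` centralize `x`, contradicting `N_P(T) > T`.
-/

/-- `℧ᵐ`-style subgroup: the subgroup generated by the `m`-th powers of elements of `H`.
For a `p`-group `H` and `m = p ^ n`, this is `℧ⁿ(H)`. -/
def mho {G : Type*} [Group G] (m : ℕ) (H : Subgroup G) : Subgroup G :=
  Subgroup.closure ((fun x => x ^ m) '' (H : Set G))

def IsStronglyClosed {G : Type*} [Group G] (A P : Subgroup G) : Prop :=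
  ∀ g : G, ∀ a ∈ A, g⁻¹ * a * g ∈ P → g⁻¹ * a * g ∈ A

section

open Finset Polynomial

theorem exists_natCast_mul_eq_pow_mul {R : Type*} [CommRing R] {p : ℕ} (hp : p.Prime) {t : R}
    (ht : IsNilpotent t) (h1 : (t + 1) ^ p = 1) : ∃ v, (p : R) * t = t ^ p * v := by
  have hbinom := add_pow_prime_eq hp t 1
  obtain ⟨s, hs⟩ : ∃ s, ∑ k ∈ Ioo 0 p, t ^ (k - 1) * 1 ^ (p - k - 1) * ((p.choose k / p : ℕ) : R)
      = 1 + t * s := by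
    refine ⟨∑ k ∈ Ico 2 p, t ^ (k - 2) * ((p.choose k / p : ℕ) : R), ?_⟩
    rw [← Ico_add_one_left_eq_Ioo, sum_eq_sum_Ico_succ_bot (by have := hp.two_le; lia), mul_sum]
    simp only [zero_add, Nat.reduceAdd, one_pow, mul_one, Nat.sub_self, pow_zero,
      Nat.choose_one_right, Nat.div_self hp.pos, Nat.cast_one]
    refine congrArg _ (sum_congr rfl fun k hk => ?_)
    rw [← mul_assoc, ← pow_succ', show k - 2 + 1 = k - 1 by grind]
  rw [h1, one_pow, mul_one, hs] at hbinom
  have hunit : IsUnit (1 + t * s) := ((Commute.all _ _).isNilpotent_mul_right ht).isUnit_one_add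
  refine ⟨-↑hunit.unit⁻¹, ?_⟩
  calc (p : R) * t = p * t * (1 + t * s) * ↑hunit.unit⁻¹ := by
        rw [mul_assoc _ (1 + t * s), hunit.mul_val_inv, mul_one]
    _ = t ^ p * -↑hunit.unit⁻¹ := by linear_combination (-↑hunit.unit⁻¹ : R) * hbinom

theorem natCast_pow_mul_eq_zero_of_add_one_pow_eq_one {R : Type*} [CommRing R] {p : ℕ}
    (hp : p.Prime) (n : ℕ) {t : R} (h1 : (t + 1) ^ p = 1) (h2 : t ^ (n * (p - 1) + 1) = 0) :
    (p : R) ^ n * t = 0 := by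
  obtain ⟨v, hv⟩ := exists_natCast_mul_eq_pow_mul hp ⟨_, h2⟩ h1
  have hpow : ∀ k, ∃ w, (p : R) ^ k * t = t ^ (k * (p - 1) + 1) * w := by
    intro k
    induction k with
    | zero => exact ⟨1, by simp⟩
    | succ k ih =>
      obtain ⟨w, hw⟩ := ih
      refine ⟨v * w, ?_⟩
      have hexp : (k + 1) * (p - 1) + 1 = p + k * (p - 1) := by
        have := hp.one_le; zify [this]; ring
      rw [pow_succ', mul_assoc, hw, hexp, pow_add]
      linear_combination t ^ (k * (p - 1)) * w * hv
  obtain ⟨w, hw⟩ := hpow n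
  rw [hw, h2, zero_mul]

theorem natCast_pow_mul_sub_one_eq_zero {R : Type*} [Ring R] {p : ℕ} (hp : p.Prime) (n : ℕ)
    {s : R} (h1 : s ^ p = 1) (h2 : (s - 1) ^ (n * (p - 1) + 1) = 0) :
    (p : R) ^ n * (s - 1) = 0 := by
  set I : Ideal ℤ[X] := Ideal.span {X ^ (n * (p - 1) + 1), (X + 1) ^ p - 1}
  have hmem : (p : ℤ[X]) ^ n * X ∈ I := by
    rw [← Ideal.Quotient.eq_zero_iff_mem, map_mul, map_pow, map_natCast]
    refine natCast_pow_mul_eq_zero_of_add_one_pow_eq_one hp n ?_ ?_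
    · rw [← sub_eq_zero, ← map_one (Ideal.Quotient.mk I), ← map_add, ← map_pow, ← map_sub,
        Ideal.Quotient.eq_zero_iff_mem]
      exact Ideal.subset_span (by simp)
    · rw [← map_pow, Ideal.Quotient.eq_zero_iff_mem]
      exact Ideal.subset_span (by simp)
  have hker : I ≤ RingHom.ker (aeval (s - 1)).toRingHom := by
    rw [Ideal.span_le]
    rintro f (rfl | rfl) <;> simp [h1, h2]
  simpa using hker hmem

end

theorem MulAut.map_pow_prime_pow_eq {A : Type*} [CommGroup A] {p : ℕ} (hp : p.Prime) (n : ℕ)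
    (σ : MulAut A) (hσ : σ ^ p = 1) (hτ : ∀ a, (fun b => σ b / b)^[n * (p - 1) + 1] a = 1)
    (a : A) : σ (a ^ p ^ n) = a ^ p ^ n := by
  let s : AddMonoid.End (Additive A) := σ.toMonoidHom.toAdditive
  have hs : ∀ k b, (s ^ k) b = Additive.ofMul ((σ ^ k) b.toMul) := by
    intro k b
    induction k generalizing b with
    | zero => rfl
    | succ k ih => rw [pow_succ, AddMonoid.End.coe_mul, Function.comp_apply, ih, pow_succ,
        MulAut.mul_apply]; rfl
  have hτs : ∀ k b, ((s - 1) ^ k) b = Additive.ofMul ((fun b => σ b / b)^[k] b.toMul) := by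
    intro k b
    induction k generalizing b with
    | zero => rfl
    | succ k ih =>
      rw [pow_succ', AddMonoid.End.coe_mul, Function.comp_apply, ih, Function.iterate_succ_apply']
      rfl
  have h1 : s ^ p = 1 := by
    ext b
    rw [hs, hσ]
    rfl
  have h2 : (s - 1) ^ (n * (p - 1) + 1) = 0 := by
    ext b
    rw [hτs, hτ]
    rfl
  have hzero := congr($(natCast_pow_mul_sub_one_eq_zero hp n h1 h2) (Additive.ofMul a))
  rw [AddMonoid.End.coe_mul, Function.comp_apply, ← Nat.cast_pow,
    AddMonoid.End.natCast_apply] at hzero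
  rw [← div_eq_one, map_pow, ← div_pow]
  exact hzero

open scoped commutatorElement Pointwise

namespace Subgroup

variable {G : Type*} [Group G] {p : ℕ}

def centerOf (K : Subgroup G) : Subgroup G := K ⊓ centralizer K

theorem mem_centerOf {K : Subgroup G} {u : G} :
    u ∈ K.centerOf ↔ u ∈ K ∧ ∀ k ∈ K, k * u = u * k :=
  Iff.rfl

theorem map_subtype_center (K : Subgroup G) : (center K).map K.subtype = K.centerOf := by
  ext u
  simp only [mem_map, mem_center_iff, mem_centerOf, Subtype.forall, Subtype.ext_iff]
  constructor
  · rintro ⟨x, hx, rfl⟩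
    exact ⟨x.2, hx⟩
  · rintro ⟨hu, hcomm⟩
    exact ⟨⟨u, hu⟩, hcomm, rfl⟩

instance (K : Subgroup G) : IsMulCommutative K.centerOf :=
  ⟨⟨fun a b => Subtype.ext (b.2.2 a a.2.1)⟩⟩

theorem mem_normalizer_iff_conj_smul_eq {g : G} {K : Subgroup G} :
    g ∈ normalizer (K : Set G) ↔ MulAut.conj g • K = K :=
  mem_normalizer_iff_map_conj_eq

theorem smul_centralizer (φ : MulAut G) (s : Set G) : φ • centralizer s = centralizer (φ • s) := by
  ext x
  simp only [mem_pointwise_smul_iff_inv_smul_mem, mem_centralizer_iff, Set.mem_smul_set]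
  constructor
  · rintro H _ ⟨h, hh, rfl⟩
    simpa [MulAut.smul_def] using congrArg φ (H h hh)
  · intro H h hh
    apply φ.injective
    simpa [MulAut.smul_def] using H (φ • h) ⟨h, hh, rfl⟩

theorem smul_centerOf (φ : MulAut G) (K : Subgroup G) : φ • K.centerOf = (φ • K).centerOf := by
  rw [centerOf, centerOf, smul_inf, smul_centralizer, coe_pointwise_smul]

theorem iterate_commutatorElement_mem_lowerCentralSeries {K : Subgroup G} {y v : G} (hy : y ∈ K)
    (hv : v ∈ K) (k : ℕ) : (⁅y, ·⁆)^[k] v ∈ K.lowerCentralSeries k := by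
  induction k with
  | zero => exact hv
  | succ k ih =>
    rw [Function.iterate_succ_apply', lowerCentralSeries_succ, commutator_comm]
    exact commutator_mem_commutator hy ih

open scoped IsMulCommutative in
theorem commute_pow_prime_pow_of_mem_normalizer (hp : p.Prime) (n : ℕ) {V : Subgroup G}
    [IsMulCommutative V] {y : G} (hy : y ∈ normalizer (V : Set G)) (hyp : y ^ p ∈ centralizer V)
    (hτ : ∀ v ∈ V, (⁅y, ·⁆)^[n * (p - 1) + 1] v = 1) {v : G} (hv : v ∈ V) :
    Commute y (v ^ p ^ n) := by
  set σ := normalizerMonoidHom V ⟨y, hy⟩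
  have hσ : σ ^ p = 1 := by
    rw [← map_pow]
    ext w
    simp only [normalizerMonoidHom_apply_apply_coe, MulAut.one_apply, SubmonoidClass.coe_pow]
    rw [← mem_centralizer_iff.mp hyp _ w.2, mul_inv_cancel_right]
  have hσv : ∀ w : V, ((σ w / w : V) : G) = ⁅y, (w : G)⁆ := fun w => by
    simp [σ, commutatorElement_def, div_eq_mul_inv]
  have hτσ : ∀ w : V, (fun b => σ b / b)^[n * (p - 1) + 1] w = 1 := by
    intro w
    have := (Function.Semiconj.iterate_right (f := Subtype.val) hσv (n * (p - 1) + 1) w)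
    exact Subtype.ext (this.trans (hτ _ w.2))
  have := congrArg Subtype.val (MulAut.map_pow_prime_pow_eq hp n σ hσ hτσ ⟨v, hv⟩)
  simpa [σ, Commute, SemiconjBy, mul_inv_eq_iff_eq_mul] using this

theorem le_centralizer_pow_of_mem_centerOf {K : Subgroup G} {u : G} (hu : u ∈ K.centerOf)
    (m : ℕ) : K ≤ centralizer {u ^ m} :=
  fun k hk => mem_centralizer_singleton_iff.mpr ((Commute.pow_right (hu.2 k hk) m).eq)

/-- Sylow subgroups of a subgroup `H` are kept as subgroups of `G`, to avoid nested coercions. -/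
structure IsSylowIn (p : ℕ) (K H : Subgroup G) : Prop where
  le : K ≤ H
  isPGroup : IsPGroup p K
  eq_of_le : ∀ {K' : Subgroup G}, IsPGroup p K' → K ≤ K' → K' ≤ H → K' = K

namespace IsSylowIn

variable {H K : Subgroup G}

def toSylow (hK : IsSylowIn p K H) : Sylow p H where
  toSubgroup := K.subgroupOf H
  isPGroup' := hK.isPGroup.comap_of_injective _ H.subtype_injective
  is_maximal' {Q} hQ hKQ := by
    have hmap : Q.map H.subtype = K := by
      refine hK.eq_of_le (hQ.map _) ?_ (map_subtype_le Q)
      intro k hk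
      exact ⟨⟨k, hK.le hk⟩, hKQ hk, rfl⟩
    rw [← hmap]
    exact (comap_map_eq_self_of_injective H.subtype_injective Q).symm

theorem coe_toSylow (hK : IsSylowIn p K H) : (hK.toSylow : Subgroup H) = K.subgroupOf H := rfl

theorem mono {C : Subgroup G} (hK : IsSylowIn p K H) (hKC : K ≤ C) (hCH : C ≤ H) :
    IsSylowIn p K C :=
  ⟨hKC, hK.isPGroup, fun hK' hKK' hK'C => hK.eq_of_le hK' hKK' (hK'C.trans hCH)⟩

theorem conj_smul (hK : IsSylowIn p K H) {h : G} (hh : h ∈ H) :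
    IsSylowIn p (MulAut.conj h • K) H where
  le := conj_smul_le_of_le hK.le ⟨h, hh⟩
  isPGroup := by
    rw [pointwise_smul_def]
    exact hK.isPGroup.map _
  eq_of_le {K'} hK' hle hK'H := by
    have hmax := hK.eq_of_le (K' := (MulAut.conj h)⁻¹ • K') ?_ (pointwise_smul_subset_iff.mp hle)
      (subset_pointwise_smul_iff.mp (hK'H.trans (conj_smul_eq_self_of_mem hh).ge))
    · rw [← hmax, smul_inv_smul]
    · rw [pointwise_smul_def]
      exact hK'.map _

theorem mem_centerOf_of_le (hK : IsSylowIn p K H) {S : Subgroup G} (hS : IsPGroup p S)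
    (hKS : K ≤ S) {w : G} (hw : w ∈ S.centerOf) (hwH : w ∈ H) : w ∈ K.centerOf := by
  have hSH : S ⊓ H = K := hK.eq_of_le (hS.to_le inf_le_left) (le_inf hKS hK.le) inf_le_right
  exact ⟨hSH ▸ ⟨hw.1, hwH⟩, fun k hk => hw.2 k (hKS hk)⟩

end IsSylowIn

theorem _root_.Sylow.isSylowIn_map_subtype {H : Subgroup G} (S : Sylow p H) :
    IsSylowIn p ((S : Subgroup H).map H.subtype) H where
  le := map_subtype_le _
  isPGroup := S.isPGroup'.map _
  eq_of_le {K'} hK' hSK' hK'H := by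
    have : (S : Subgroup H) = K'.subgroupOf H :=
      (S.is_maximal' (hK'.comap_of_injective _ H.subtype_injective)
        (fun s hs => hSK' ⟨s, hs, rfl⟩)).symm
    rw [this, subgroupOf_map_subtype, inf_of_le_left hK'H]

theorem _root_.Sylow.isSylowIn_top (P : Sylow p G) : IsSylowIn p (P : Subgroup G) ⊤ :=
  ⟨le_top, P.isPGroup', fun hK' hPK' _ => P.is_maximal' hK' hPK'⟩

theorem exists_isSylowIn_le {H K : Subgroup G} (hKH : K ≤ H) (hK : IsPGroup p K) :
    ∃ S, IsSylowIn p S H ∧ K ≤ S := by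
  obtain ⟨S, hS⟩ := (hK.comap_of_injective _ H.subtype_injective).exists_le_sylow (G := H)
  exact ⟨_, S.isSylowIn_map_subtype, fun k hk => ⟨⟨k, hKH hk⟩, hS hk, rfl⟩⟩

def PowCenterCentral (p n : ℕ) (H : Subgroup G) : Prop :=
  ∀ ⦃P Q : Subgroup G⦄ ⦃u : G⦄, IsSylowIn p P H → IsSylowIn p Q H → u ∈ Q.centerOf →
    u ^ p ^ n ∈ P → P ≤ centralizer {u ^ p ^ n}

section Finite

variable [Finite G]

theorem exists_mem_normalizer_pow_prime_mem (hp : p.Prime) {T P : Subgroup G}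
    (hP : IsPGroup p P) (hTP : T < P) :
    ∃ y ∈ normalizer (T : Set G) ⊓ P, y ∉ T ∧ y ^ p ∈ T := by
  have : Fact p.Prime := ⟨hp⟩
  have : Group.IsNilpotent P := hP.isNilpotent
  have hTP' : T.subgroupOf P < ⊤ := by
    obtain ⟨z, hzP, hzT⟩ := SetLike.exists_of_lt hTP
    exact lt_top_iff_ne_top.mpr fun h => hzT (subgroupOf_eq_top.mp h hzP)
  obtain ⟨y₀, hy₀N, hy₀T⟩ := SetLike.exists_of_lt (Group.normalizerCondition_of_isNilpotent _ hTP')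
  rw [← subgroupOf_normalizer_eq hTP.le] at hy₀N
  by_contra! h
  have hdesc : ∀ k, ∀ z ∈ normalizer (T : Set G) ⊓ P, z ^ p ^ k ∈ T → z ∈ T := by
    intro k
    induction k with
    | zero => simp
    | succ k ih =>
      intro z hz hzk
      rw [pow_succ', pow_mul] at hzk
      by_contra hzT
      exact h z hz hzT (ih _ (pow_mem hz p) hzk)
  obtain ⟨k, hk⟩ := hP y₀
  refine hy₀T (hdesc k y₀ ⟨hy₀N, y₀.2⟩ ?_)
  rw [← SubgroupClass.coe_pow, hk]
  exact one_mem T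

theorem le_centralizer_of_pow_eq_of_mem_centerOf (hp : p.Prime) (n : ℕ)
    {P : Subgroup G} (hP : IsPGroup p P) (hclass : P.lowerCentralSeries (n * (p - 1) + 1) = ⊥)
    {x w : G} (hw : w ∈ (centralizer {x} ⊓ P).centerOf) (hwx : w ^ p ^ n = x) :
    P ≤ centralizer {x} := by
  set T := centralizer {x} ⊓ P
  by_contra hPx
  have hTP : T < P := inf_le_right.lt_of_ne fun h => hPx (h ▸ inf_le_left)
  obtain ⟨y, hy, hyT, hypT⟩ := exists_mem_normalizer_pow_prime_mem hp hP hTP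
  obtain ⟨hyN, hyP⟩ := mem_inf.mp hy
  have hyV : y ∈ normalizer (T.centerOf : Set G) := by
    rw [mem_normalizer_iff_conj_smul_eq] at hyN ⊢
    rw [smul_centerOf, hyN]
  have hypV : y ^ p ∈ centralizer T.centerOf := fun v hv => (hv.2 _ hypT).symm
  have hτ : ∀ v ∈ T.centerOf, (⁅y, ·⁆)^[n * (p - 1) + 1] v = 1 := fun v hv => by
    have := iterate_commutatorElement_mem_lowerCentralSeries hyP hv.1.2 (n * (p - 1) + 1)
    rwa [hclass, mem_bot] at this
  have hcomm := commute_pow_prime_pow_of_mem_normalizer hp n hyV hypV hτ hw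
  rw [hwx] at hcomm
  exact hyT ⟨mem_centralizer_singleton_iff.mpr hcomm.eq, hyP⟩

namespace IsSylowIn

variable {H K L : Subgroup G}

theorem exists_conj_smul_eq (hp : p.Prime) (hK : IsSylowIn p K H) (hL : IsSylowIn p L H) :
    ∃ h ∈ H, MulAut.conj h • K = L := by
  have : Fact p.Prime := ⟨hp⟩
  obtain ⟨h, hh⟩ := MulAction.exists_smul_eq H hK.toSylow hL.toSylow
  refine ⟨h, h.2, ?_⟩
  have := congrArg (fun S : Sylow p H => (S : Subgroup H)) hh
  simp only [Sylow.coe_subgroup_smul, coe_toSylow, conj_smul_subgroupOf hK.le] at this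
  rwa [subgroupOf_inj, inf_of_le_left (conj_smul_le_of_le hK.le h), inf_of_le_left hL.le] at this

theorem of_le_of_isSylowIn {C Q : Subgroup G} (hp : p.Prime) (hK : IsSylowIn p K C)
    (hQ : IsSylowIn p Q H) (hQC : Q ≤ C) (hCH : C ≤ H) : IsSylowIn p K H := by
  obtain ⟨c, hc, rfl⟩ := (hQ.mono hQC hCH).exists_conj_smul_eq hp hK
  exact hQ.conj_smul (hCH hc)

theorem inf_of_le_normalizer (hp : p.Prime) (hK : IsSylowIn p K H) (hLH : L ≤ H)
    (hHL : H ≤ normalizer (L : Set G)) : IsSylowIn p (K ⊓ L) L := by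
  refine ⟨inf_le_right, hK.isPGroup.to_le inf_le_left, fun {K'} hK' hle hK'L => ?_⟩
  obtain ⟨S, hS, hK'S⟩ := exists_isSylowIn_le (hK'L.trans hLH) hK'
  obtain ⟨g, hg, hgS⟩ := hS.exists_conj_smul_eq hp hK
  have hgK' : MulAut.conj g • K' ≤ K ⊓ L := by
    refine le_inf ?_ ?_
    · rw [← hgS]
      exact pointwise_smul_le_pointwise_smul_iff.mpr hK'S
    · rw [← mem_normalizer_iff_conj_smul_eq.mp (hHL hg)]
      exact pointwise_smul_le_pointwise_smul_iff.mpr hK'L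
  have hcard : Nat.card (MulAut.conj g • K' : Subgroup G) = Nat.card K' :=
    Nat.card_congr (equivSMul (MulAut.conj g) K').toEquiv.symm
  have heq : MulAut.conj g • K' = K' := eq_of_le_of_card_ge (hgK'.trans hle) hcard.ge
  exact le_antisymm (heq ▸ hgK') hle

end IsSylowIn

theorem exists_mem_centerOf_pow_eq (hp : p.Prime) {H Q R : Subgroup G} (hQ : IsSylowIn p Q H)
    {u : G} (hu : u ∈ Q.centerOf) (hR : IsSylowIn p R H) {m : ℕ}
    (hRu : R ≤ centralizer {u ^ m}) : ∃ w ∈ R.centerOf, w ^ m = u ^ m := by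
  have hQC := hQ.mono (le_inf (le_centralizer_pow_of_mem_centerOf hu m) hQ.le) inf_le_right
  obtain ⟨c, hc, rfl⟩ := hQC.exists_conj_smul_eq hp (hR.mono (le_inf hRu hR.le) inf_le_right)
  refine ⟨MulAut.conj c u, ?_, ?_⟩
  · rw [← smul_centerOf]
    exact smul_mem_pointwise_smul _ _ _ hu
  · rw [← map_pow, MulAut.conj_apply, (mem_centralizer_singleton_iff.mp (mem_inf.mp hc).1),
      mul_inv_cancel_right]

theorem exists_isSylowIn_le_centralizer (hp : p.Prime) {H Q T : Subgroup G}
    (hQ : IsSylowIn p Q H) {u : G} (hu : u ∈ Q.centerOf) {m : ℕ}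
    (hT : T ≤ centralizer {u ^ m} ⊓ H) (hTp : IsPGroup p T) :
    ∃ R, IsSylowIn p R H ∧ T ≤ R ∧ R ≤ centralizer {u ^ m} ∧ ∃ w ∈ R.centerOf, w ^ m = u ^ m := by
  obtain ⟨R, hR, hTR⟩ := exists_isSylowIn_le hT hTp
  have hRH := hR.of_le_of_isSylowIn hp hQ (le_inf (le_centralizer_pow_of_mem_centerOf hu m) hQ.le)
    inf_le_right
  have hRu : R ≤ centralizer {u ^ m} := hR.le.trans inf_le_left
  exact ⟨R, hRH, hTR, hRu, exists_mem_centerOf_pow_eq hp hQ hu hRH hRu⟩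

theorem le_centralizer_of_le_normalizer (hp : p.Prime) (n : ℕ) {H P Q : Subgroup G}
    (hclass : P.lowerCentralSeries (n * (p - 1) + 1) = ⊥) (hP : IsSylowIn p P H)
    (hQ : IsSylowIn p Q H) {u : G} (hu : u ∈ Q.centerOf) (hx : u ^ p ^ n ∈ P)
    (hN : H ≤ normalizer (centralizer {u ^ p ^ n} ⊓ P : Set G)) :
    P ≤ centralizer {u ^ p ^ n} := by
  set x := u ^ p ^ n
  set T := centralizer {x} ⊓ P
  obtain ⟨R, hR, hTR, -, u₁, hu₁, hu₁x⟩ := exists_isSylowIn_le_centralizer hp hQ hu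
    (inf_le_inf_left _ hP.le) (hP.isPGroup.to_le inf_le_right)
  set L := centralizer T.centerOf ⊓ H
  have hHL : H ≤ normalizer (L : Set G) := fun h hh => by
    rw [mem_normalizer_iff_conj_smul_eq, smul_inf, smul_centralizer, ← coe_pointwise_smul,
      smul_centerOf, mem_normalizer_iff_conj_smul_eq.mp (hN hh), conj_smul_eq_self_of_mem hh]
  have hxT : x ∈ T.centerOf := ⟨⟨mem_centralizer_singleton_iff.mpr rfl, hx⟩,
    fun k hk => mem_centralizer_singleton_iff.mp (mem_inf.mp hk).1⟩
  have hPL : P ⊓ L = T := by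
    ext a
    constructor
    · rintro ⟨haP, haL, -⟩
      exact ⟨mem_centralizer_singleton_iff.mpr (mem_centralizer_iff.mp haL x hxT).symm, haP⟩
    · intro ha
      exact ⟨(mem_inf.mp ha).2, fun v hv => (hv.2 a ha).symm, hP.le (mem_inf.mp ha).2⟩
  have hTL : IsSylowIn p T L := hPL ▸ hP.inf_of_le_normalizer hp inf_le_right hHL
  have hRL : IsSylowIn p (R ⊓ L) L := hR.inf_of_le_normalizer hp inf_le_right hHL
  have hu₁RL : u₁ ∈ (R ⊓ L).centerOf :=
    ⟨⟨hu₁.1, fun v hv => hu₁.2 v (hTR hv.1), hR.le hu₁.1⟩, fun k hk => hu₁.2 k (mem_inf.mp hk).1⟩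
  obtain ⟨w, hw, hwx⟩ :=
    exists_mem_centerOf_pow_eq hp hRL hu₁RL hTL (by rw [hu₁x]; exact inf_le_left)
  exact le_centralizer_of_pow_eq_of_mem_centerOf hp n hP.isPGroup hclass hw (hwx.trans hu₁x)

theorem le_centralizer_of_powCenterCentral_normalizer (hp : p.Prime) (n : ℕ)
    {H P Q : Subgroup G} (hP : IsSylowIn p P H) (hQ : IsSylowIn p Q H) {u : G}
    (hu : u ∈ Q.centerOf) (hx : u ^ p ^ n ∈ P)
    (ihN : PowCenterCentral p n (normalizer (centralizer {u ^ p ^ n} ⊓ P : Set G) ⊓ H))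
    (ihP : ∀ ⦃P'⦄, IsSylowIn p P' H → u ^ p ^ n ∈ P' →
      Nat.card (centralizer {u ^ p ^ n} ⊓ P : Subgroup G) <
        Nat.card (centralizer {u ^ p ^ n} ⊓ P' : Subgroup G) → P' ≤ centralizer {u ^ p ^ n}) :
    P ≤ centralizer {u ^ p ^ n} := by
  set x := u ^ p ^ n
  set T := centralizer {x} ⊓ P
  by_contra hPx
  have hTP : T < P := inf_le_right.lt_of_ne fun h => hPx (h ▸ inf_le_left)
  obtain ⟨R, hR, hTR, hRx, -⟩ := exists_isSylowIn_le_centralizer hp hQ hu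
    (inf_le_inf_left _ hP.le) (hP.isPGroup.to_le inf_le_right)
  have hTR' : T < R := hTR.lt_of_ne fun h =>
    hPx (hR.eq_of_le hP.isPGroup (h.ge.trans inf_le_right) hP.le ▸ hRx)
  obtain ⟨yP, hyP, hyPT, -⟩ := exists_mem_normalizer_pow_prime_mem hp hP.isPGroup hTP
  obtain ⟨yR, hyR, hyRT, -⟩ := exists_mem_normalizer_pow_prime_mem hp hR.isPGroup hTR'
  obtain ⟨W, hW, hNW⟩ := exists_isSylowIn_le (inf_le_inf_left _ hP.le)
    (hP.isPGroup.to_le inf_le_right)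
  obtain ⟨V, hV, hNV⟩ := exists_isSylowIn_le (inf_le_inf_left _ hR.le)
    (hR.isPGroup.to_le inf_le_right)
  obtain ⟨R', hR', hVR'⟩ := exists_isSylowIn_le (hV.le.trans inf_le_right) hV.isPGroup
  have hTN : ∀ {K}, T ≤ K → T ≤ normalizer (T : Set G) ⊓ K := fun hTK => le_inf le_normalizer hTK
  have hxT : x ∈ T := ⟨mem_centralizer_singleton_iff.mpr rfl, hx⟩
  have hTR'' : T ≤ R' := (hTN hTR).trans (hNV.trans hVR')
  have hR'x : R' ≤ centralizer {x} := by
    refine ihP hR' (hTR'' hxT) ?_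
    calc Nat.card T < Nat.card (normalizer (T : Set G) ⊓ R : Subgroup G) :=
          Set.card_strictMono (SetLike.coe_ssubset_coe.mpr
            ((hTN hTR).lt_of_ne fun h => hyRT (h ▸ hyR)))
      _ ≤ Nat.card (centralizer {x} ⊓ R' : Subgroup G) :=
          card_le_of_le (le_inf (inf_le_right.trans hRx) (hNV.trans hVR'))
  obtain ⟨w, hw, hwx⟩ := exists_mem_centerOf_pow_eq hp hQ hu hR' hR'x
  have hwV : w ∈ V.centerOf := hV.mem_centerOf_of_le hR'.isPGroup hVR' hw
    ⟨centralizer_le_normalizer _ (centralizer_le hTR'' hw.2), hR'.le hw.1⟩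
  have hWx : W ≤ centralizer {x} := by
    have := ihN hW hV hwV (by rw [hwx]; exact hNW (hTN inf_le_right hxT))
    rwa [hwx] at this
  exact hyPT ⟨(hWx (hNW hyP)), (mem_inf.mp hyP).2⟩

theorem powCenterCentral (hp : p.Prime) (n : ℕ)
    (hclass : ∀ K : Subgroup G, IsPGroup p K → K.lowerCentralSeries (n * (p - 1) + 1) = ⊥)
    (H : Subgroup G) : PowCenterCentral p n H := by
  induction hH : Nat.card H using Nat.strong_induction_on generalizing H with
  | _ k ihH =>
  intro P Q u hP hQ hu hx
  induction hj : Nat.card H - Nat.card (centralizer {u ^ p ^ n} ⊓ P : Subgroup G)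
    using Nat.strong_induction_on generalizing P with
  | _ j ihP =>
  by_cases hN : H ≤ normalizer (centralizer {u ^ p ^ n} ⊓ P : Set G)
  · exact le_centralizer_of_le_normalizer hp n (hclass P hP.isPGroup) hP hQ hu hx hN
  refine le_centralizer_of_powCenterCentral_normalizer hp n hP hQ hu hx (ihH _ ?_ _ rfl)
    fun P' hP' hxP' hcard => ihP _ ?_ hP' hxP' rfl
  · rw [← hH]
    exact Set.card_strictMono (SetLike.coe_ssubset_coe.mpr
      (inf_le_right.lt_of_ne fun h => hN (h ▸ inf_le_left)))
  · have := card_le_of_le (inf_le_right.trans hP'.le : centralizer {u ^ p ^ n} ⊓ P' ≤ H)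
    omega

theorem lowerCentralSeries_eq_bot_of_isPGroup (hp : p.Prime) (P : Sylow p G) {c : ℕ}
    (hP : (P : Subgroup G).lowerCentralSeries c = ⊥) {K : Subgroup G} (hK : IsPGroup p K) :
    K.lowerCentralSeries c = ⊥ := by
  have : Fact p.Prime := ⟨hp⟩
  obtain ⟨Q, hKQ⟩ := hK.exists_le_sylow
  obtain ⟨g, rfl⟩ := MulAction.exists_smul_eq G P Q
  have hgP : ((g • P : Sylow p G) : Subgroup G).lowerCentralSeries c = ⊥ := by
    rw [Sylow.coe_subgroup_smul, pointwise_smul_def]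
    exact (map_lowerCentralSeries _ _ c).symm.trans (by rw [hP]; exact map_bot _)
  exact le_bot_iff.mp (hgP ▸ lowerCentralSeries_mono c hKQ)

end Finite

end Subgroup

theorem mem_mho_iff {G : Type*} [Group G] {K : Subgroup G} [IsMulCommutative K] {m : ℕ} {a : G} :
    a ∈ mho m K ↔ ∃ z ∈ K, z ^ m = a := by
  refine ⟨fun ha => ?_, fun ⟨z, hz, hza⟩ => Subgroup.subset_closure ⟨z, hz, hza⟩⟩
  induction ha using Subgroup.closure_induction with
  | mem _ h => exact h
  | one => exact ⟨1, one_mem K, one_pow m⟩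
  | mul _ _ _ _ h₁ h₂ =>
    obtain ⟨z₁, hz₁, rfl⟩ := h₁
    obtain ⟨z₂, hz₂, rfl⟩ := h₂
    exact ⟨z₁ * z₂, mul_mem hz₁ hz₂,
      (Commute.mul_pow (setLike_mul_comm hz₁ hz₂) m)⟩
  | inv _ _ h =>
    obtain ⟨z, hz, rfl⟩ := h
    exact ⟨z⁻¹, inv_mem hz, inv_pow z m⟩

/-- If a Sylow `p`-subgroup `P` of a finite group `G` has nilpotence class at most
`n(p-1)+1`, then `℧ⁿ(Z(P))` is strongly closed in `P` with respect to `G`. -/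
theorem mho_center_stronglyClosed (p n : ℕ) (hp : p.Prime)
    (G : Type*) [Group G] [Finite G] (P : Sylow p G)
    (hclass : upperCentralSeries ↥(P : Subgroup G) (n * (p - 1) + 1) = ⊤) :
    IsStronglyClosed
      (mho (p ^ n) ((Subgroup.center ↥(P : Subgroup G)).map (P : Subgroup G).subtype))
      (P : Subgroup G) := by
  have hlcs : (P : Subgroup G).lowerCentralSeries (n * (p - 1) + 1) = ⊥ := by
    rw [← Subgroup.top_subtype_lowerCentralSeries,
      Subgroup.lowerCentralSeries_eq_bot_iff_upperCentralSeries_eq_top.mpr hclass, Subgroup.map_bot]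
  intro g a ha haP
  rw [Subgroup.map_subtype_center, mem_mho_iff] at ha ⊢
  obtain ⟨z, hz, rfl⟩ := ha
  have hQ := P.isSylowIn_top.conj_smul (Subgroup.mem_top g⁻¹)
  have hzQ : MulAut.conj g⁻¹ z ∈ (MulAut.conj g⁻¹ • (P : Subgroup G)).centerOf := by
    rw [← Subgroup.smul_centerOf]
    exact Subgroup.smul_mem_pointwise_smul _ _ _ hz
  have hx : (MulAut.conj g⁻¹ z) ^ p ^ n = g⁻¹ * z ^ p ^ n * g := by
    rw [← map_pow, MulAut.conj_apply, inv_inv]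
  rw [← hx] at haP ⊢
  have hPx := Subgroup.powCenterCentral hp n
    (fun _ => Subgroup.lowerCentralSeries_eq_bot_of_isPGroup hp P hlcs) ⊤ P.isSylowIn_top hQ hzQ haP
  exact Subgroup.exists_mem_centerOf_pow_eq hp hQ hzQ P.isSylowIn_top hPx
end

section
/- Let p be a prime, n a nonnegative integer, and let P be a nonabelian Sylow p-subgroup of a finite group G. Suppose that P has nilpotence class at most n(p-1)+1 and that G has no nontrivial strongly closed abelian p-subgroup (i.e., no nontrivial abelian subgroup of P is strongly closed in P with respect to G). Then Z(P) has exponent at most p^n, i.e., x^{p^n} = 1 for every x ∈ Z(P). -/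
section PrimePowerRelation

open Finset

variable {p : ℕ}

theorem exists_one_add_pow_prime_eq {R : Type*} [CommRing R] (hp : p.Prime) (t : R) :
    ∃ g : R, (1 + t) ^ p = 1 + p * t * (1 + t * g) + t ^ p := by
  obtain ⟨m, rfl⟩ : ∃ m, p = m + 2 := ⟨p - 2, by have := hp.two_le; omega⟩
  set g := ∑ k ∈ range m, t ^ k * ((m + 2).choose (k + 2) / (m + 2) : ℕ)
  have hsum : ∑ k ∈ range m, t ^ (k + 2) * ((m + 2).choose (k + 2) : R) =
      (m + 2 : ℕ) * t * (t * g) := by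
    simp only [g, mul_sum]
    refine sum_congr rfl fun k hk => ?_
    obtain ⟨c, hc⟩ := hp.dvd_choose_self (k := k + 2) (by omega) (by simp at hk; omega)
    rw [hc, Nat.mul_div_cancel_left _ hp.pos]
    push_cast
    ring
  refine ⟨g, ?_⟩
  rw [add_comm 1 t, add_pow, sum_range_succ, sum_range_succ', sum_range_succ']
  simp only [one_pow, mul_one, Nat.choose_self, Nat.choose_zero_right, zero_add,
    Nat.choose_one_right]
  linear_combination hsum

theorem exists_prime_mul_eq_pow_mul {R : Type*} [CommRing R] (hp : p.Prime) {t : R}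
    (ht : IsNilpotent t) (hs : (1 + t) ^ p = 1) : ∃ u : R, p * t = t ^ p * u := by
  obtain ⟨g, hg⟩ := exists_one_add_pow_prime_eq hp t
  obtain ⟨v, hv⟩ := ((Commute.all t g).isNilpotent_mul_right ht).isUnit_one_add.exists_right_inv
  exact ⟨-v, by linear_combination v * hs - v * hg - p * t * hv⟩

open scoped IsMulCommutative in
theorem prime_pow_mul_eq_zero {A : Type*} [Ring A] (hp : p.Prime) (n : ℕ) {t : A}
    (ht : t ^ (n * (p - 1) + 1) = 0) (hs : (1 + t) ^ p = 1) : (p : A) ^ n * t = 0 := by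
  let T : Algebra.adjoin ℤ {t} := ⟨t, Algebra.self_mem_adjoin_singleton ℤ t⟩
  obtain ⟨u, hu⟩ := exists_prime_mul_eq_pow_mul hp (t := T) ⟨_, Subtype.ext ht⟩ (Subtype.ext hs)
  have key : ∀ k, (p : Algebra.adjoin ℤ {t}) ^ k * T = T ^ (k * (p - 1) + 1) * u ^ k := by
    intro k
    induction k with
    | zero => simp
    | succ k ih =>
      obtain ⟨q, rfl⟩ : ∃ q, p = q + 1 := ⟨p - 1, (Nat.sub_add_cancel hp.one_le).symm⟩
      rw [Nat.add_sub_cancel] at ih ⊢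
      rw [pow_succ', mul_assoc, ih]
      linear_combination T ^ (k * q) * u ^ k * hu
  have := congrArg Subtype.val (key n)
  simpa [T, ht] using this

end PrimePowerRelation

section ConjEnd

open Subgroup
open scoped IsMulCommutative commutatorElement

variable {G : Type*} [Group G] (M : Subgroup G) {u : G} (hu : ∀ x ∈ M, u * x * u⁻¹ ∈ M)

/-- Written additively so that conjugation by `u` lives in the ring `AddMonoid.End`. -/
def Subgroup.conjEnd : AddMonoid.End (Additive M) :=
  MonoidHom.toAdditive <|
    ((MulAut.conj u).toMonoidHom.comp M.subtype).codRestrict M fun x => hu x x.2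

theorem Subgroup.conjEnd_apply (a : Additive M) :
    ((M.conjEnd hu a).toMul : G) = u * a.toMul * u⁻¹ :=
  rfl

theorem Subgroup.conjEnd_pow_apply (k : ℕ) (a : Additive M) :
    (((M.conjEnd hu ^ k) a).toMul : G) = u ^ k * a.toMul * (u ^ k)⁻¹ := by
  induction k generalizing a with
  | zero => simp
  | succ k ih =>
    rw [pow_succ, AddMonoid.End.coe_mul, Function.comp_apply, ih, conjEnd_apply, pow_succ]
    group

theorem Subgroup.conjEnd_sub_one_apply [IsMulCommutative M] (a : Additive M) :
    (((M.conjEnd hu - 1) a).toMul : G) = ⁅u, (a.toMul : G)⁆ := by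
  show ((M.conjEnd hu a - a).toMul : G) = _
  rw [toMul_sub, Subgroup.coe_div, conjEnd_apply, commutatorElement_def, div_eq_mul_inv]

theorem Subgroup.conjEnd_sub_one_pow_apply_mem_lowerCentralSeries [IsMulCommutative M] (k : ℕ)
    (a : Additive M) :
    ((((M.conjEnd hu - 1) ^ k) a).toMul : G) ∈ (⊤ : Subgroup G).lowerCentralSeries k := by
  induction k generalizing a with
  | zero => simp
  | succ k ih =>
    rw [pow_succ', AddMonoid.End.coe_mul, Function.comp_apply, conjEnd_sub_one_apply,
      Subgroup.lowerCentralSeries_succ, commutator_comm]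
    exact commutator_mem_commutator (mem_top u) (ih _)

theorem Subgroup.conjEnd_pow_eq_one {k : ℕ} (huk : ∀ x ∈ M, Commute (u ^ k) x) :
    M.conjEnd hu ^ k = 1 := by
  refine DFunLike.ext _ _ fun a => Additive.toMul.injective (Subtype.ext ?_)
  rw [conjEnd_pow_apply, (huk _ (a.toMul).2).eq, mul_inv_cancel_right]
  rfl

end ConjEnd

section PGroup

open Subgroup

variable {G : Type*} [Group G] {p : ℕ}

instance Subgroup.isMulCommutative_centralizer_inf (H : Subgroup G) :
    IsMulCommutative ↥(centralizer (H : Set G) ⊓ H) :=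
  ⟨⟨fun a b => Subtype.ext (mem_centralizer_iff.mp a.2.1 b b.2.2).symm⟩⟩

theorem Subgroup.mul_mul_inv_mem_centralizer_of_mem_normalizer {H : Subgroup G} {g x : G}
    (hg : g ∈ normalizer (H : Set G)) (hx : x ∈ centralizer (H : Set G)) :
    g * x * g⁻¹ ∈ centralizer (H : Set G) := by
  refine mem_centralizer_iff.mpr fun h hh => ?_
  have hxh := mem_centralizer_iff.mp hx (g⁻¹ * h * g) ((mem_normalizer_iff''.mp hg h).mp hh)
  calc h * (g * x * g⁻¹) = g * (g⁻¹ * h * g * x) * g⁻¹ := by group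
    _ = g * (x * (g⁻¹ * h * g)) * g⁻¹ := by rw [hxh]
    _ = g * x * g⁻¹ * h := by group

theorem exists_pow_prime_pow_notMem {D : Subgroup G} {g : G} (hg : g ∉ D) {k : ℕ}
    (hk : g ^ p ^ k ∈ D) : ∃ j, g ^ p ^ j ∉ D ∧ (g ^ p ^ j) ^ p ∈ D := by
  induction k with
  | zero => exact absurd (by simpa using hk) hg
  | succ k ih =>
    by_cases h : g ^ p ^ k ∈ D
    · exact ih h
    · exact ⟨k, h, by rwa [← pow_mul, ← pow_succ]⟩

theorem IsPGroup.exists_mem_normalizer_notMem_pow_mem [Finite G] [Fact p.Prime]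
    (hG : IsPGroup p G) {D : Subgroup G} (hD : D < ⊤) :
    ∃ u ∈ normalizer (D : Set G), u ∉ D ∧ u ^ p ∈ D := by
  have := hG.isNilpotent
  obtain ⟨g, hgN, hgD⟩ := SetLike.exists_of_lt (Group.normalizerCondition_of_isNilpotent D hD)
  obtain ⟨k, hk⟩ := hG g
  obtain ⟨j, hj, hjp⟩ := exists_pow_prime_pow_notMem hgD (k := k) (hk ▸ D.one_mem)
  exact ⟨g ^ p ^ j, pow_mem hgN _, hj, hjp⟩

open scoped IsMulCommutative commutatorElement in
theorem commute_pow_prime_pow_of_lowerCentralSeries_eq_bot (hp : p.Prime) (n : ℕ)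
    (hcl : (⊤ : Subgroup G).lowerCentralSeries (n * (p - 1) + 1) = ⊥) {M : Subgroup G}
    [IsMulCommutative M] {u : G} (hu : ∀ x ∈ M, u * x * u⁻¹ ∈ M)
    (hup : ∀ x ∈ M, Commute (u ^ p) x) {x : G} (hx : x ∈ M) : Commute u (x ^ p ^ n) := by
  set t := M.conjEnd hu - 1
  have ht : t ^ (n * (p - 1) + 1) = 0 := by
    refine DFunLike.ext _ _ fun a => Additive.toMul.injective (Subtype.ext ?_)
    have := M.conjEnd_sub_one_pow_apply_mem_lowerCentralSeries hu (n * (p - 1) + 1) a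
    rwa [hcl, mem_bot] at this
  have key := prime_pow_mul_eq_zero hp n ht (by rw [add_sub_cancel, M.conjEnd_pow_eq_one hu hup])
  set a : Additive M := Additive.ofMul ⟨x, hx⟩
  have hfix : t ((p ^ n : ℕ) • a) = 0 := by
    rw [map_nsmul, ← AddMonoid.End.natCast_apply, Nat.cast_pow]
    exact DFunLike.congr_fun key a
  have hcomm := congrArg (fun b : Additive M => (b.toMul : G)) hfix
  simp only [t, conjEnd_sub_one_apply, toMul_nsmul, toMul_zero, Subgroup.coe_pow,
    Subgroup.coe_one, a, toMul_ofMul] at hcomm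
  exact commutatorElement_eq_one_iff_commute.mp hcomm

theorem IsPGroup.pow_mem_center_of_centralizer_le [Finite G] [hp : Fact p.Prime]
    (hG : IsPGroup p G) {n : ℕ} (hcl : Subgroup.upperCentralSeries G (n * (p - 1) + 1) = ⊤)
    {y : G} (hy : centralizer {y ^ p ^ n} ≤ centralizer {y}) : y ^ p ^ n ∈ center G := by
  have := hG.isNilpotent
  have hlcs : (⊤ : Subgroup G).lowerCentralSeries (n * (p - 1) + 1) = ⊥ :=
    Subgroup.lowerCentralSeries_eq_bot_iff_nilpotencyClass_le.mpr
      (Subgroup.upperCentralSeries_eq_top_iff_nilpotencyClass_le.mp hcl)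
  set D := centralizer {y ^ p ^ n}
  by_contra hb
  have hD : D < ⊤ := lt_top_iff_ne_top.mpr fun h => hb <| mem_center_iff.mpr fun g =>
    mem_centralizer_singleton_iff.mp (h.ge (mem_top g))
  obtain ⟨u, huN, huD, hupD⟩ := hG.exists_mem_normalizer_notMem_pow_mem hD
  have hyZ : y ∈ centralizer (D : Set G) ⊓ D :=
    ⟨fun d hd => mem_centralizer_singleton_iff.mp (hy hd),
      mem_centralizer_singleton_iff.mpr (Commute.self_pow y _).eq⟩
  have hu x (hx : x ∈ centralizer (D : Set G) ⊓ D) : u * x * u⁻¹ ∈ centralizer (D : Set G) ⊓ D :=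
    ⟨mul_mul_inv_mem_centralizer_of_mem_normalizer huN hx.1, (mem_normalizer_iff.mp huN x).mp hx.2⟩
  exact huD <| mem_centralizer_singleton_iff.mpr <| Commute.eq <|
    commute_pow_prime_pow_of_lowerCentralSeries_eq_bot hp.out n hlcs hu
      (fun x hx => mem_centralizer_iff.mp hx.1 _ hupD) hyZ

theorem Subgroup.mem_center_iff_coe_mem_centralizer {H : Subgroup G} {x : H} :
    x ∈ center H ↔ (x : G) ∈ centralizer (H : Set G) := by
  simp [mem_center_iff, mem_centralizer_iff, Subtype.ext_iff]

theorem Subgroup.exists_mem_normalizer_inf_notMem_of_lt {D K : Subgroup G}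
    [Group.IsNilpotent K] (h : D < K) : ∃ t ∈ normalizer (D : Set G) ⊓ K, t ∉ D := by
  have hlt : D.subgroupOf K < ⊤ := by
    rw [lt_top_iff_ne_top, Ne, subgroupOf_eq_top]
    exact h.not_ge
  obtain ⟨t, htN, htD⟩ := SetLike.exists_of_lt (Group.normalizerCondition_of_isNilpotent _ hlt)
  rw [← subgroupOf_normalizer_eq h.le, mem_subgroupOf] at htN
  exact ⟨t, ⟨htN, t.2⟩, htD⟩

end PGroup

section PowSubgroup

open Subgroup

variable {G : Type*} [Group G]

open scoped IsMulCommutative in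
def Subgroup.powSubgroup (A : Subgroup G) [IsMulCommutative A] (k : ℕ) : Subgroup G :=
  (powMonoidHom k : A →* A).range.map A.subtype

theorem Subgroup.mem_powSubgroup {A : Subgroup G} [IsMulCommutative A] {k : ℕ} {g : G} :
    g ∈ A.powSubgroup k ↔ ∃ z ∈ A, z ^ k = g := by
  simp only [powSubgroup, mem_map, MonoidHom.mem_range, powMonoidHom_apply]
  constructor
  · rintro ⟨_, ⟨z, rfl⟩, rfl⟩
    exact ⟨z, z.2, rfl⟩
  · rintro ⟨z, hz, rfl⟩
    exact ⟨_, ⟨⟨z, hz⟩, rfl⟩, rfl⟩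

theorem Subgroup.powSubgroup_le (A : Subgroup G) [IsMulCommutative A] (k : ℕ) :
    A.powSubgroup k ≤ A := fun _ hg => by
  obtain ⟨z, hz, rfl⟩ := mem_powSubgroup.mp hg
  exact pow_mem hz k

theorem Subgroup.powSubgroup_eq_bot_iff {A : Subgroup G} [IsMulCommutative A] {k : ℕ} :
    A.powSubgroup k = ⊥ ↔ ∀ z ∈ A, z ^ k = 1 := by
  simp only [eq_bot_iff_forall, mem_powSubgroup]
  exact ⟨fun h z hz => h _ ⟨z, hz, rfl⟩, fun h _ ⟨z, hz, hzg⟩ => hzg ▸ h z hz⟩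

end PowSubgroup

section Sylow

open Subgroup

variable {G : Type*} [Group G] {p : ℕ}

theorem Sylow.mem_smul_iff {P : Sylow p G} {g x : G} : x ∈ g • P ↔ g⁻¹ * x * g ∈ P := by
  show x ∈ ((g • P : Sylow p G) : Subgroup G) ↔ _
  rw [Sylow.coe_subgroup_smul, mem_pointwise_smul_iff_inv_smul_mem, MulAut.smul_def,
    MulAut.conj_inv_apply]
  rfl

theorem Sylow.mul_mul_inv_mem_centralizer_inf_smul {R : Sylow p G} {y : G}
    (hy : y ∈ centralizer (R : Set G) ⊓ R) (c : G) :
    c * y * c⁻¹ ∈ centralizer ((c • R : Sylow p G) : Set G) ⊓ (c • R : Sylow p G) := by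
  refine ⟨mem_centralizer_iff.mpr fun h hh => ?_, Sylow.mem_smul_iff.mpr ?_⟩
  · have hyh := mem_centralizer_iff.mp hy.1 _ (Sylow.mem_smul_iff.mp hh)
    calc h * (c * y * c⁻¹) = c * (c⁻¹ * h * c * y) * c⁻¹ := by group
      _ = c * (y * (c⁻¹ * h * c)) * c⁻¹ := by rw [hyh]
      _ = c * y * c⁻¹ * h := by group
  · simpa [mul_assoc] using hy.2

variable [Finite G] [Fact p.Prime]

theorem Sylow.exists_mem_le_smul (R : Sylow p G) {K X : Subgroup G} (hRK : (R : Subgroup G) ≤ K)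
    (hX : IsPGroup p X) (hXK : X ≤ K) : ∃ c ∈ K, X ≤ ((c • R : Sylow p G) : Subgroup G) := by
  obtain ⟨T, hT⟩ := (hX.comap_subtype (K := K)).exists_le_sylow
  obtain ⟨c, hc⟩ := MulAction.exists_smul_eq K (R.subtype hRK) T
  refine ⟨c, c.2, fun x hx => ?_⟩
  have hxT : (⟨x, hXK hx⟩ : K) ∈ (c • R.subtype hRK : Sylow p K) := hc ▸ hT hx
  rwa [Sylow.smul_subtype] at hxT

theorem Sylow.exists_conj_mem_of_le {K X : Subgroup G} (hX : IsPGroup p X) (hXK : X ≤ K) {y : G}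
    (hy : IsPGroup p (zpowers y)) (hyK : y ∈ K) :
    ∃ c ∈ K, ∃ Q : Sylow p G, X ≤ Q ∧ c * y * c⁻¹ ∈ Q := by
  obtain ⟨S, hS⟩ := (hX.comap_subtype (K := K)).exists_le_sylow
  obtain ⟨T, hT⟩ := (hy.comap_subtype (K := K)).exists_le_sylow
  obtain ⟨c, rfl⟩ := MulAction.exists_smul_eq K T S
  obtain ⟨Q, hQ⟩ := ((c • T).isPGroup'.map K.subtype).exists_le_sylow
  refine ⟨c, c.2, Q, fun x hx => hQ ⟨⟨x, hXK hx⟩, hS hx, rfl⟩,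
    hQ ⟨c * ⟨y, hyK⟩ * c⁻¹, Sylow.mem_smul_iff.mpr ?_, rfl⟩⟩
  rw [show c⁻¹ * (c * ⟨y, hyK⟩ * c⁻¹) * c = ⟨y, hyK⟩ by group]
  exact hT (mem_zpowers y)

theorem Sylow.exists_le_and_pow_eq {R : Sylow p G} {y : G} (hy : y ∈ centralizer (R : Set G) ⊓ R)
    (k : ℕ) {X : Subgroup G} (hX : IsPGroup p X) (hXy : X ≤ centralizer {y ^ k}) :
    ∃ Q : Sylow p G, X ≤ Q ∧ ∃ z ∈ centralizer (Q : Set G) ⊓ Q, z ^ k = y ^ k := by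
  have hR : (R : Subgroup G) ≤ centralizer {y ^ k} := fun r hr =>
    mem_centralizer_singleton_iff.mpr (Commute.pow_right (hy.1 r hr) k).eq
  obtain ⟨c, hc, hXc⟩ := R.exists_mem_le_smul hR hX hXy
  refine ⟨c • R, hXc, c * y * c⁻¹, Sylow.mul_mul_inv_mem_centralizer_inf_smul hy c, ?_⟩
  rw [conj_pow, mem_centralizer_singleton_iff.mp hc, mul_inv_cancel_right]

theorem Sylow.pow_mem_centralizer_of_mem {n : ℕ} {P Q : Sylow p G}
    (hcl : Subgroup.upperCentralSeries P (n * (p - 1) + 1) = ⊤) {z : G}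
    (hz : z ∈ centralizer (Q : Set G) ⊓ Q) (hzP : z ∈ P)
    (hPQ : centralizer {z ^ p ^ n} ⊓ P ≤ Q) : z ^ p ^ n ∈ centralizer (P : Set G) := by
  have hcent := P.isPGroup'.pow_mem_center_of_centralizer_le hcl (y := ⟨z, hzP⟩) fun w hw => by
    have hwQ : (w : G) ∈ Q := hPQ ⟨mem_centralizer_singleton_iff.mpr
      (congrArg Subtype.val (mem_centralizer_singleton_iff.mp hw)), w.2⟩
    exact mem_centralizer_singleton_iff.mpr (Subtype.ext (hz.1 w hwQ))
  exact mem_center_iff_coe_mem_centralizer.mp hcent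

theorem Sylow.exists_card_centralizer_inf_lt {P : Sylow p G} {b z : G} (hb : b ∈ P)
    (hz : z ∈ centralizer ((centralizer {b} ⊓ P : Subgroup G) : Set G))
    (hzp : IsPGroup p (zpowers z)) (hzD : z ∉ centralizer {b} ⊓ (P : Subgroup G)) :
    ∃ Q : Sylow p G, normalizer ((centralizer {b} ⊓ P : Subgroup G) : Set G) ⊓ P ≤ Q ∧
      Nat.card (centralizer {b} ⊓ P : Subgroup G) <
        Nat.card (centralizer {b} ⊓ Q : Subgroup G) := by
  set D := centralizer {b} ⊓ (P : Subgroup G)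
  have hbD : b ∈ D := ⟨mem_centralizer_singleton_iff.mpr rfl, hb⟩
  obtain ⟨c, hc, Q, hNQ, hcQ⟩ := Sylow.exists_conj_mem_of_le (K := normalizer (D : Set G))
    (P.isPGroup'.to_le inf_le_right) inf_le_left hzp (centralizer_le_normalizer _ hz)
  have hv : c * z * c⁻¹ ∈ centralizer (D : Set G) :=
    mul_mul_inv_mem_centralizer_of_mem_normalizer hc hz
  have hDQ : D ≤ centralizer {b} ⊓ Q :=
    le_inf inf_le_left ((le_inf le_normalizer inf_le_right).trans hNQ)
  have hlt : D < centralizer {b} ⊓ Q := SetLike.lt_iff_le_and_exists.mpr ⟨hDQ, c * z * c⁻¹,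
    ⟨mem_centralizer_singleton_iff.mpr (mem_centralizer_iff.mp hv b hbD).symm, hcQ⟩,
    fun h => hzD (by simpa [mul_assoc] using (mem_normalizer_iff''.mp hc _).mp h)⟩
  exact ⟨Q, hNQ, (card_le_of_le hDQ).lt_of_ne fun e => hlt.ne (eq_of_le_of_card_ge hDQ e.ge)⟩

theorem Sylow.pow_mem_centralizer {n : ℕ}
    (hcl : ∀ Q : Sylow p G, Subgroup.upperCentralSeries Q (n * (p - 1) + 1) = ⊤)
    {R : Sylow p G} {y : G} (hy : y ∈ centralizer (R : Set G) ⊓ R) {P : Sylow p G}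
    (hP : y ^ p ^ n ∈ P) : y ^ p ^ n ∈ centralizer (P : Set G) := by
  set b := y ^ p ^ n
  by_contra hPb
  let Counterexample := {Q : Sylow p G // b ∈ Q ∧ b ∉ centralizer (Q : Set G)}
  have : Nonempty Counterexample := ⟨⟨P, hP, hPb⟩⟩
  obtain ⟨⟨P, hbP, hPb⟩, hmax⟩ := Finite.exists_max fun Q : Counterexample =>
    Nat.card (centralizer {b} ⊓ (Q : Subgroup G) : Subgroup G)
  set D := centralizer {b} ⊓ (P : Subgroup G)
  obtain ⟨Q₁, hDQ₁, z, hz, hzb⟩ :=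
    Sylow.exists_le_and_pow_eq hy (p ^ n) (P.isPGroup'.to_le inf_le_right) inf_le_left
  by_cases hzP : z ∈ P
  · have := Sylow.pow_mem_centralizer_of_mem (hcl P) hz hzP (by rwa [hzb])
    exact hPb (by rwa [hzb] at this)
  obtain ⟨Q, hNQ, hcard⟩ := Sylow.exists_card_centralizer_inf_lt hbP
    (fun d hd => hz.1 d (hDQ₁ hd)) (Q₁.isPGroup'.to_le (zpowers_le.mpr hz.2)) (fun h => hzP h.2)
  have hbQ : b ∈ Q := hNQ ⟨le_normalizer ⟨mem_centralizer_singleton_iff.mpr rfl, hbP⟩, hbP⟩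
  have hQb : b ∈ centralizer (Q : Set G) := by
    by_contra h
    exact (hmax ⟨Q, hbQ, h⟩).not_gt hcard
  have := P.isPGroup'.isNilpotent
  obtain ⟨t, htN, htD⟩ := exists_mem_normalizer_inf_notMem_of_lt (D := D) (K := P)
    (lt_of_le_of_ne inf_le_right fun hDP => hPb fun g hg =>
      mem_centralizer_singleton_iff.mp (hDP ▸ hg : g ∈ D).1)
  exact htD ⟨mem_centralizer_singleton_iff.mpr (hQb t (hNQ htN)), htN.2⟩

theorem Sylow.isStronglyClosed_powSubgroup_center {n : ℕ}
    (hcl : ∀ Q : Sylow p G, Subgroup.upperCentralSeries Q (n * (p - 1) + 1) = ⊤) (P : Sylow p G) :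
    IsStronglyClosed ((centralizer ((P : Subgroup G) : Set G) ⊓ P).powSubgroup (p ^ n)) P := by
  intro g a ha hgaP
  obtain ⟨z, hz, rfl⟩ := mem_powSubgroup.mp ha
  have hy := Sylow.mul_mul_inv_mem_centralizer_inf_smul hz g⁻¹
  have hpow : (g⁻¹ * z * g⁻¹⁻¹) ^ p ^ n = g⁻¹ * z ^ p ^ n * g := by rw [conj_pow, inv_inv]
  rw [← hpow] at hgaP ⊢
  have hcent := Sylow.pow_mem_centralizer hcl hy hgaP
  obtain ⟨Q, hPQ, z', hz', hz'b⟩ := Sylow.exists_le_and_pow_eq hy (p ^ n) P.isPGroup'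
    fun h hh => mem_centralizer_singleton_iff.mpr (hcent h hh)
  rw [← P.is_maximal' Q.isPGroup' hPQ]
  exact mem_powSubgroup.mpr ⟨z', hz', hz'b⟩

end Sylow

theorem exponent_center_le_of_no_stronglyClosed_abelian_general (p n : ℕ) (hp : p.Prime)
    (G : Type*) [Group G] [Finite G] (P : Sylow p G)
    (hclass : upperCentralSeries ↥(P : Subgroup G) (n * (p - 1) + 1) = ⊤)
    (hsc : ∀ A : Subgroup G, A ≤ (P : Subgroup G) →
      (∀ a ∈ A, ∀ b ∈ A, a * b = b * a) → IsStronglyClosed A (P : Subgroup G) → A = ⊥) :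
    ∀ x ∈ Subgroup.center ↥(P : Subgroup G), x ^ p ^ n = 1 := by
  have := Fact.mk hp
  have hcl : ∀ Q : Sylow p G, Subgroup.upperCentralSeries Q (n * (p - 1) + 1) = ⊤ := fun Q => by
    rw [← Subgroup.comap_upperCentralSeries (Sylow.equiv Q P),
      show Subgroup.upperCentralSeries P _ = ⊤ from hclass, Subgroup.comap_top]
  have hAZ := (Subgroup.centralizer ((P : Subgroup G) : Set G) ⊓ P).powSubgroup_le (p ^ n)
  have hA := hsc _ (hAZ.trans inf_le_right)
    (fun a ha b hb => ((hAZ ha).1 b (hAZ hb).2).symm) (P.isStronglyClosed_powSubgroup_center hcl)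
  intro x hx
  exact Subtype.ext <| Subgroup.powSubgroup_eq_bot_iff.mp hA x
    ⟨Subgroup.mem_center_iff_coe_mem_centralizer.mp hx, x.2⟩

/-- If a nonabelian Sylow `p`-subgroup `P` of a finite group `G` has nilpotence class at
most `n(p-1)+1`, and no nontrivial abelian subgroup of `P` is strongly closed in `P` with
respect to `G`, then `Z(P)` has exponent at most `p ^ n`. -/
theorem exponent_center_le_of_no_stronglyClosed_abelian (p n : ℕ) (hp : p.Prime)
    (G : Type*) [Group G] [Finite G] (P : Sylow p G)
    (hnonab : ¬ ∀ x y : ↥(P : Subgroup G), x * y = y * x)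
    (hclass : upperCentralSeries ↥(P : Subgroup G) (n * (p - 1) + 1) = ⊤)
    (hsc : ∀ A : Subgroup G, A ≤ (P : Subgroup G) →
      (∀ a ∈ A, ∀ b ∈ A, a * b = b * a) → IsStronglyClosed A (P : Subgroup G) → A = ⊥) :
    ∀ x ∈ Subgroup.center ↥(P : Subgroup G), x ^ p ^ n = 1 :=
  exponent_center_le_of_no_stronglyClosed_abelian_general p n hp G P hclass hsc
end

section
/- Let G be a group and m a positive integer such that x^m = 1 for every x in the center Z(G). Then for every k ≥ 0 and every element x of the (k+1)-st term Z^{k+1}(G) of the upper central series of G, one has x^m ∈ Z^k(G). In particular, every upper central quotient Z^{k+1}(G)/Z^k(G) has exponent dividing m. -/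
/-! Induction on `k`, the case `k = 0` being the hypothesis on the centre. For `x ∈ Z^{k+2}(G)`
and `t ∈ G`, the commutator `c = ⁅x, t⁆` lies in `Z^{k+1}(G)`, so `c ^ m ∈ Z^k(G)` by induction,
and `c` commutes with `x` modulo `Z^k(G)`, which gives `⁅x ^ m, t⁆ ≡ c ^ m`. Hence
`⁅x ^ m, t⁆ ∈ Z^k(G)` for all `t`, i.e. `x ^ m ∈ Z^{k+1}(G)`. -/

open scoped commutatorElement

theorem commutatorElement_pow_left_of_commute {G : Type*} [Group G] {a b : G}
    (h : Commute a ⁅a, b⁆) (n : ℕ) : ⁅a ^ n, b⁆ = ⁅a, b⁆ ^ n := by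
  induction n with
  | zero => simp
  | succ n ih =>
    calc ⁅a ^ (n + 1), b⁆ = a * ⁅a ^ n, b⁆ * a⁻¹ * ⁅a, b⁆ := by
          simp only [commutatorElement_def, pow_succ']
          group
      _ = ⁅a, b⁆ ^ (n + 1) := by
          rw [ih, (h.pow_right n).eq, pow_succ]
          group

theorem commutatorElement_pow_left_mem {G : Type*} [Group G] {N : Subgroup G} [N.Normal]
    {a b : G} (hcomm : ⁅⁅a, b⁆, a⁆ ∈ N) {n : ℕ} (hpow : ⁅a, b⁆ ^ n ∈ N) : ⁅a ^ n, b⁆ ∈ N := by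
  rw [← QuotientGroup.ker_mk' N, MonoidHom.mem_ker] at hcomm hpow ⊢
  rw [map_commutatorElement, map_commutatorElement, commutatorElement_eq_one_iff_commute] at hcomm
  rw [map_pow, map_commutatorElement] at hpow
  rw [map_commutatorElement, map_pow, commutatorElement_pow_left_of_commute hcomm.symm, hpow]

theorem pow_mem_upperCentralSeries_of_center_exponent_general (G : Type*) [Group G] (m : ℕ)
    (hZ : ∀ x ∈ Subgroup.center G, x ^ m = 1) :
    ∀ k : ℕ, ∀ x ∈ upperCentralSeries G (k + 1), x ^ m ∈ upperCentralSeries G k := by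
  intro k
  induction k with
  | zero =>
    intro x hx
    exact Subgroup.mem_bot.mpr (hZ x ((Subgroup.upperCentralSeries_one G).le hx))
  | succ k ih =>
    intro x hx
    refine Subgroup.mem_upperCentralSeries_succ_iff.mpr fun t => ?_
    have hxt : ⁅x, t⁆ ∈ Subgroup.upperCentralSeries G (k + 1) :=
      Subgroup.mem_upperCentralSeries_succ_iff.mp hx t
    exact commutatorElement_pow_left_mem (Subgroup.mem_upperCentralSeries_succ_iff.mp hxt x)
      (ih _ hxt)

/-- If every element of the center of `G` satisfies `x ^ m = 1`, then for every `k` the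
`m`-th power of every element of `Z^{k+1}(G)` lies in `Z^k(G)`; in particular every upper
central quotient has exponent dividing `m`. -/
theorem pow_mem_upperCentralSeries_of_center_exponent (G : Type*) [Group G] (m : ℕ)
    (hm : 0 < m) (hZ : ∀ x ∈ Subgroup.center G, x ^ m = 1) :
    ∀ k : ℕ, ∀ x ∈ upperCentralSeries G (k + 1), x ^ m ∈ upperCentralSeries G k :=
  pow_mem_upperCentralSeries_of_center_exponent_general G m hZ
end

section
/- Let G be a nilpotent group of nilpotence class at most c, and let m be a positive integer such that x^m = 1 for every x in the center Z(G). Then G has exponent dividing m^c, i.e., x^{m^c} = 1 for every x ∈ G. -/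
/-!
If every commutator `⁅x, g⁆` is central, then `⁅x ^ m, g⁆ = ⁅x, g⁆ ^ m = 1`, so `x ^ m` is
central. Hence the centre of `G ⧸ Z(G)` again has exponent dividing `m`, and since `Z^{k+1}(G)` is
the preimage of `Z^k(G ⧸ Z(G))`, induction on `k` gives `x ^ m ^ k = 1` on `Z^k(G)`.
-/

open scoped commutatorElement
open Subgroup (center mem_center_iff mem_comap)

section

variable {G : Type*} [Group G]

theorem commutatorElement_pow_left_of_mem_center {x g : G} (h : ⁅x, g⁆ ∈ center G) (k : ℕ) :
    ⁅x ^ k, g⁆ = ⁅x, g⁆ ^ k := by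
  induction k with
  | zero => simp
  | succ k ih =>
    have hcomm : x * ⁅x, g⁆ ^ k = ⁅x, g⁆ ^ k * x := mem_center_iff.mp (pow_mem h k) x
    calc ⁅x ^ (k + 1), g⁆ = x * ⁅x ^ k, g⁆ * x⁻¹ * ⁅x, g⁆ := by
          simp only [commutatorElement_def]; group
      _ = ⁅x, g⁆ ^ (k + 1) := by rw [ih, hcomm, mul_inv_cancel_right, pow_succ]

theorem pow_mem_center_of_forall_commutatorElement_mem_center {m : ℕ}
    (hZ : ∀ z ∈ center G, z ^ m = 1) {x : G} (hx : ∀ g, ⁅x, g⁆ ∈ center G) :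
    x ^ m ∈ center G := by
  refine mem_center_iff.mpr fun g => ?_
  have h : ⁅x ^ m, g⁆ = 1 := by
    rw [commutatorElement_pow_left_of_mem_center (hx g), hZ _ (hx g)]
  exact (commutatorElement_eq_one_iff_mul_comm.mp h).symm

theorem pow_eq_one_of_mem_center_quotient_center {m : ℕ} (hZ : ∀ z ∈ center G, z ^ m = 1) :
    ∀ y ∈ center (G ⧸ center G), y ^ m = 1 := by
  intro y hy
  obtain ⟨x, rfl⟩ := QuotientGroup.mk_surjective y
  have hx : x ∈ Subgroup.upperCentralSeriesStep (center G) :=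
    (Subgroup.upperCentralSeriesStep_eq_comap_center _).ge hy
  rw [← QuotientGroup.mk_pow, QuotientGroup.eq_one_iff]
  exact pow_mem_center_of_forall_commutatorElement_mem_center hZ hx

theorem pow_pow_eq_one_of_mem_upperCentralSeries {m : ℕ} (hZ : ∀ z ∈ center G, z ^ m = 1)
    {c : ℕ} {x : G} (hx : x ∈ Subgroup.upperCentralSeries G c) : x ^ m ^ c = 1 := by
  induction c generalizing G with
  | zero => simp_all
  | succ c ih =>
    rw [← Subgroup.comap_upperCentralSeries_quotient_center, mem_comap] at hx
    have hpow : x ^ m ^ c ∈ center G := by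
      rw [← QuotientGroup.eq_one_iff, QuotientGroup.mk_pow]
      exact ih (pow_eq_one_of_mem_center_quotient_center hZ) hx
    rw [pow_succ, pow_mul]
    exact hZ _ hpow

end

theorem exponent_dvd_of_center_exponent_general (G : Type*) [Group G] (c m : ℕ)
    (hclass : upperCentralSeries G c = ⊤)
    (hZ : ∀ x ∈ Subgroup.center G, x ^ m = 1) :
    ∀ x : G, x ^ m ^ c = 1 :=
  fun x => pow_pow_eq_one_of_mem_upperCentralSeries hZ ((Subgroup.eq_top_iff' _).mp hclass x)

/-- If `G` is nilpotent of class at most `c` and every element of `Z(G)` satisfies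
`x ^ m = 1`, then `G` has exponent dividing `m ^ c`. -/
theorem exponent_dvd_of_center_exponent (G : Type*) [Group G] (c m : ℕ) (hm : 0 < m)
    (hclass : upperCentralSeries G c = ⊤)
    (hZ : ∀ x ∈ Subgroup.center G, x ^ m = 1) :
    ∀ x : G, x ^ m ^ c = 1 :=
  exponent_dvd_of_center_exponent_general G c m hclass hZ
end

section
/- Let p be an odd prime and n ≥ 1. Let V be the ZMod(p^n)-module of functions from Fin p to ZMod(p^n), and let σ : V → V be the linear automorphism cyclically shifting coordinates, (σ v)(i) = v(i+1). Then the image of the linear map (σ - id)^p equals the set of elements v in the image of (σ - id) satisfying p^{n-1} · v = 0. -/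
/-!
Write `τ = σ - 1`. Since `σ ^ p = 1`, expanding `(τ + 1) ^ p = 1` binomially gives
`τ ^ p = p * τ * u` with `u = -(1 + τ * s(τ))` for an integer polynomial `s`. As `p` is
nilpotent on `V`, so are `τ ^ p`, `τ` and `τ * s(τ)`; hence `u` is a unit and
`im τ ^ p = p • im τ`. Finally `im τ` is the set of vectors with coordinate sum zero, and a
sum-zero vector killed by `p ^ (n - 1)` has the form `v = p • w`; it is `p` times the sum-zero
vector `w - Pi.single 0 (∑ w)`, because `p * ∑ w = ∑ v = 0`.
-/

/-- The cyclic coordinate-shift linear automorphism of `Fin p → R`, as a linear map: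
`(shiftLM p R) v i = v (i + 1)`. -/
def shiftLM (p : ℕ) [NeZero p] (R : Type*) [CommRing R] :
    (Fin p → R) →ₗ[R] (Fin p → R) where
  toFun v i := v (i + 1)
  map_add' _ _ := rfl
  map_smul' _ _ := rfl

open Polynomial in
theorem exists_X_add_one_pow_eq {p : ℕ} (hp : p.Prime) :
    ∃ s : ℤ[X], (X + 1) ^ p = X ^ p + 1 + (p : ℤ[X]) * X * (1 + X * s) := by
  obtain ⟨r, hr⟩ := exists_add_pow_prime_eq hp (X : ℤ[X]) 1
  have hr₀ : r.coeff 0 = 1 := by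
    have h := congrArg (coeff · 1) (hr.trans (by ring : _ = X ^ p + 1 + X * ((p : ℤ[X]) * r)))
    simpa [coeff_X_add_one_pow, coeff_X_pow, coeff_one, hp.one_lt.ne, hp.ne_zero] using h
  obtain ⟨s, hs⟩ := X_dvd_iff.mpr (show (r - 1).coeff 0 = 0 by simp [hr₀])
  exact ⟨s, by rw [hr, one_pow, mul_one, ← hs, add_sub_cancel]⟩

open Polynomial in
theorem exists_pow_eq_natCast_mul_mul_unit {A : Type*} [Ring A] {p : ℕ} (hp : p.Prime)
    (hpA : IsNilpotent (p : A)) {x : A} (hx : (x + 1) ^ p = 1) :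
    ∃ u : Aˣ, x ^ p = p * x * u := by
  obtain ⟨s, hs⟩ := exists_X_add_one_pow_eq hp
  set y := aeval x s
  have hxy : Commute x y := by simpa using (Commute.all X s).map (aeval x)
  have hsum : x ^ p + p * x * (1 + x * y) = 0 := by
    have h := congrArg (aeval x) hs
    simp only [map_add, map_mul, map_pow, map_natCast, map_one, aeval_X, hx] at h
    rwa [add_right_comm, right_eq_add] at h
  have hxp : x ^ p = p * (x * -(1 + x * y)) := by
    rw [eq_neg_of_add_eq_zero_left hsum, mul_neg, mul_neg, mul_assoc]
  have hx_nil : IsNilpotent x :=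
    .of_pow (hxp ▸ (Nat.cast_commute p _).isNilpotent_mul_right hpA)
  obtain ⟨u, hu⟩ := (hxy.isNilpotent_mul_right hx_nil).isUnit_one_add.neg
  exact ⟨u, by rw [hu, hxp, mul_assoc]⟩

theorem Fin.partialSum_last {M : Type*} [AddCommMonoid M] {m : ℕ} (f : Fin m → M) :
    partialSum f (last m) = ∑ i, f i := by
  rw [partialSum, val_last, List.take_of_length_le (by simp), List.sum_ofFn]

section Shift

variable {p : ℕ} [NeZero p] {R : Type*} [CommRing R]

@[simp]
theorem shiftLM_apply (v : Fin p → R) (i : Fin p) : shiftLM p R v i = v (i + 1) := rfl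

theorem shiftLM_sub_id_apply (v : Fin p → R) (i : Fin p) :
    (shiftLM p R - LinearMap.id : Module.End R (Fin p → R)) v i = v (i + 1) - v i := rfl

open Fin.NatCast in
theorem shiftLM_pow_apply (k : ℕ) (v : Fin p → R) (i : Fin p) :
    (shiftLM p R ^ k) v i = v (i + k) := by
  induction k generalizing i with
  | zero => simp
  | succ k ih =>
    rw [pow_succ', Module.End.mul_apply, shiftLM_apply, ih, Nat.cast_succ, add_assoc, add_comm 1]

theorem shiftLM_pow_self : shiftLM p R ^ p = 1 := by
  ext v i
  simp [shiftLM_pow_apply]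

theorem mem_range_shiftLM_sub_id_iff (v : Fin p → R) :
    v ∈ LinearMap.range (shiftLM p R - LinearMap.id : Module.End R (Fin p → R)) ↔
      ∑ i, v i = 0 := by
  constructor
  · rintro ⟨w, rfl⟩
    simpa [sub_eq_zero] using Equiv.sum_comp (Equiv.addRight (1 : Fin p)) w
  · obtain ⟨m, rfl⟩ := Nat.exists_eq_add_one_of_ne_zero (NeZero.ne p)
    intro hv
    refine ⟨Fin.partialSum (Fin.init v), funext fun i => ?_⟩
    induction i using Fin.lastCases with
    | last =>
      rw [Fin.sum_univ_castSucc, ← Fin.partialSum_last] at hv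
      rw [shiftLM_sub_id_apply, Fin.last_add_one, Fin.partialSum_zero, zero_sub, neg_eq_iff_eq_neg]
      exact eq_neg_of_add_eq_zero_left hv
    | cast j =>
      rw [shiftLM_sub_id_apply, Fin.coeSucc_eq_succ, Fin.partialSum_succ, add_sub_cancel_left]
      rfl

theorem mem_range_natCast_mul_shiftLM_sub_id {c : ℕ} {u v : Fin p → R} (hv : ∑ i, v i = 0)
    (hu : v = c • u) :
    v ∈ LinearMap.range
      ((c : Module.End R (Fin p → R)) * (shiftLM p R - LinearMap.id)) := by
  have hsum : ∑ i, (u - Pi.single 0 (∑ j, u j) : Fin p → R) i = 0 := by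
    simp [Finset.sum_sub_distrib]
  obtain ⟨w, hw⟩ := (mem_range_shiftLM_sub_id_iff _).mpr hsum
  have hcu : c • ∑ j, u j = 0 := by simpa [hu, Finset.smul_sum] using hv
  refine ⟨w, ?_⟩
  rw [Module.End.mul_apply, Module.End.natCast_apply, hw, smul_sub, ← Pi.single_smul, hcu,
    Pi.single_zero, sub_zero, hu]

end Shift

theorem ZMod.exists_eq_mul_of_mul_eq_zero {m a b : ℕ} (hm : a * b = m) (ha : a ≠ 0)
    {x : ZMod m} (h : (a : ZMod m) * x = 0) : ∃ y, x = b * y := by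
  obtain ⟨z, rfl⟩ := ZMod.intCast_surjective x
  rw [← Int.cast_natCast, ← Int.cast_mul, ZMod.intCast_zmod_eq_zero_iff_dvd, ← hm,
    Nat.cast_mul] at h
  obtain ⟨y, rfl⟩ := (mul_dvd_mul_iff_left (by exact_mod_cast ha)).mp h
  exact ⟨y, by push_cast; rfl⟩

theorem mem_range_natCast_mul_shiftLM_sub_id_iff {p : ℕ} [NeZero p] {m a b : ℕ}
    (hm : a * b = m) (ha : a ≠ 0) (v : Fin p → ZMod m) :
    v ∈ LinearMap.range ((b : Module.End (ZMod m) (Fin p → ZMod m)) *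
        (shiftLM p (ZMod m) - LinearMap.id)) ↔
      v ∈ LinearMap.range (shiftLM p (ZMod m) - LinearMap.id :
          Module.End (ZMod m) (Fin p → ZMod m)) ∧ a • v = 0 := by
  constructor
  · rintro ⟨w, rfl⟩
    rw [Module.End.mul_apply, Module.End.natCast_apply, smul_smul, hm]
    refine ⟨⟨b • w, map_nsmul _ b w⟩, ?_⟩
    ext i
    simp
  · rintro ⟨hv, hav⟩
    choose u hu using fun i ↦ ZMod.exists_eq_mul_of_mul_eq_zero hm ha
      (by simpa using congrFun hav i)
    exact mem_range_natCast_mul_shiftLM_sub_id (u := u) ((mem_range_shiftLM_sub_id_iff v).mp hv)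
      (funext fun i ↦ by simp [hu i])

theorem range_shift_sub_id_pow_general (p n : ℕ) (hp : p.Prime) (hn : 1 ≤ n)
    [NeZero p] :
    ∀ v : Fin p → ZMod (p ^ n),
      v ∈ LinearMap.range
          ((shiftLM p (ZMod (p ^ n)) - LinearMap.id : Module.End (ZMod (p ^ n))
            (Fin p → ZMod (p ^ n))) ^ p) ↔
        v ∈ LinearMap.range
            (shiftLM p (ZMod (p ^ n)) - LinearMap.id : Module.End (ZMod (p ^ n))
              (Fin p → ZMod (p ^ n))) ∧
          p ^ (n - 1) • v = 0 := by
  set τ : Module.End (ZMod (p ^ n)) (Fin p → ZMod (p ^ n)) :=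
    shiftLM p (ZMod (p ^ n)) - LinearMap.id
  have hτ : (τ + 1) ^ p = 1 := by
    rw [Module.End.one_eq_id, sub_add_cancel, ← Module.End.one_eq_id, shiftLM_pow_self]
  have hp_nil : IsNilpotent (p : Module.End (ZMod (p ^ n)) (Fin p → ZMod (p ^ n))) := by
    simpa using (show IsNilpotent (p : ZMod (p ^ n)) from
      ⟨n, by rw [← Nat.cast_pow, ZMod.natCast_self]⟩).map (algebraMap _ (Module.End _ _))
  obtain ⟨u, hu⟩ := exists_pow_eq_natCast_mul_mul_unit hp hp_nil hτ
  have hrange : LinearMap.range (τ ^ p) = LinearMap.range ((p : Module.End _ _) * τ) := by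
    rw [hu, Module.End.mul_eq_comp, LinearMap.range_comp_of_range_eq_top _
      (LinearMap.range_eq_top.mpr ((Module.End.isUnit_iff _).mp u.isUnit).surjective)]
  intro v
  rw [hrange]
  exact mem_range_natCast_mul_shiftLM_sub_id_iff (pow_sub_one_mul (by omega) p)
    (pow_ne_zero _ hp.ne_zero) v

/-- For `p` an odd prime and `n ≥ 1`, on `V = Fin p → ZMod (p ^ n)` the image of
`(σ - id) ^ p` (where `σ` is the cyclic shift) consists exactly of the elements of the
image of `σ - id` killed by `p ^ (n - 1)`. -/
theorem range_shift_sub_id_pow (p n : ℕ) (hp : p.Prime) (hodd : p ≠ 2) (hn : 1 ≤ n)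
    [NeZero p] :
    ∀ v : Fin p → ZMod (p ^ n),
      v ∈ LinearMap.range
          ((shiftLM p (ZMod (p ^ n)) - LinearMap.id : Module.End (ZMod (p ^ n))
            (Fin p → ZMod (p ^ n))) ^ p) ↔
        v ∈ LinearMap.range
            (shiftLM p (ZMod (p ^ n)) - LinearMap.id : Module.End (ZMod (p ^ n))
              (Fin p → ZMod (p ^ n))) ∧
          p ^ (n - 1) • v = 0 :=
  range_shift_sub_id_pow_general p n hp hn
end

section
/- Let p be an odd prime and n ≥ 1. Let V be the additive group of functions from Fin p to ZMod(p^n), let σ be the automorphism of V cyclically shifting coordinates, and let W be the semidirect product V ⋊ ZMod(p), where k ∈ ZMod(p) acts on V as σ^k (so W is isomorphic to the regular wreath product C_{p^n} ≀ C_p). Then W is nilpotent of nilpotence class exactly n(p-1)+1. -/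
/-!
Identify `V` with the group ring `R = ZMod (p ^ n)[C_p]`, so that `σ` becomes multiplication
by a generator `x` and commutation with the generator of `C_p` becomes multiplication by
`y = x - 1`. With `γ_0 = W`, one gets `γ_k(W) ⊆ y ^ k R` for `k ≥ 1` and `y ^ k ∈ γ_k(W)`,
so the nilpotency class of `W` is the nilpotency index of `y`.

In `ℤ[X]` one has `(X - 1) ^ (p - 1) ≡ 1 + X + ⋯ + X ^ (p - 1) (mod p)`. Hence
`y ^ (p - 1) = N + p u` with `N = ∑ x ^ i` the norm element, `y N = 0` and `u N = -N`,
which gives `y ^ (n (p - 1)) = (-p) ^ (n - 1) N ≠ 0` while `y ^ (n (p - 1) + 1) = 0`.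
-/

open Finset
open Fin.NatCast Fin.CommRing
open scoped commutatorElement

open Polynomial in
theorem Polynomial.exists_X_sub_one_pow_pred_eq {p : ℕ} (hp : p.Prime) :
    ∃ h : ℤ[X],
      (X - 1) ^ (p - 1) = ∑ i ∈ range p, X ^ i + C (p : ℤ) * ((X - 1) * h - 1) := by
  have : Fact p.Prime := ⟨hp⟩
  set F : ℤ[X] := (X - 1) ^ (p - 1) - ∑ i ∈ range p, X ^ i with hF
  have hFp : F.map (Int.castRingHom (ZMod p)) = 0 := by
    have key : ((X - 1) ^ (p - 1) : (ZMod p)[X]) * (X - 1) =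
        (∑ i ∈ range p, X ^ i) * (X - 1) := by
      rw [← pow_succ, Nat.sub_add_cancel hp.one_le, geom_sum_mul, sub_pow_char, one_pow]
    have := mul_right_cancel₀ (by simpa using X_sub_C_ne_zero (1 : ZMod p)) key
    simp [hF, Polynomial.map_sum, this]
  obtain ⟨f, hf⟩ : C (p : ℤ) ∣ F := by
    refine (C_dvd_iff_dvd_coeff _ _).mpr fun i => ?_
    simpa [ZMod.intCast_zmod_eq_zero_iff_dvd] using congrArg (coeff · i) hFp
  have hf1 : f.eval 1 = -1 := by
    have := congrArg (eval 1) hf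
    simp only [hF, eval_sub, eval_pow, eval_X, eval_one, sub_self, eval_finsetSum, one_pow,
      sum_const, card_range, nsmul_one, eval_mul, eval_C,
      zero_pow (Nat.sub_ne_zero_of_lt hp.one_lt)] at this
    exact mul_left_cancel₀ (by exact_mod_cast hp.ne_zero : (p : ℤ) ≠ 0) (by linarith)
  obtain ⟨h, hh⟩ : X - C 1 ∣ f + 1 := dvd_iff_isRoot.mpr (by simp [hf1])
  exact ⟨h, by rw [C_1] at hh; linear_combination hf + C (p : ℤ) * hh⟩

section PowSubOne

variable {R : Type*} [CommRing R] {p : ℕ} {x : R}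

theorem exists_sub_one_pow_pred_eq_geom_sum_add (hp : p.Prime) (hx : x ^ p = 1) :
    ∃ u : R, (x - 1) ^ (p - 1) = ∑ i ∈ range p, x ^ i + p * u ∧
      u * ∑ i ∈ range p, x ^ i = -∑ i ∈ range p, x ^ i := by
  obtain ⟨h, hh⟩ := Polynomial.exists_X_sub_one_pow_pred_eq hp
  refine ⟨(x - 1) * Polynomial.aeval x h - 1,
    by simpa using congrArg (Polynomial.aeval x) hh, ?_⟩
  linear_combination Polynomial.aeval x h * (mul_geom_sum x p).trans (by rw [hx, sub_self])

theorem sub_one_pow_mul_pred_eq (hp : p.Prime) (hx : x ^ p = 1) {k : ℕ}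
    (hk : (p : R) ^ (k + 1) = 0) :
    (x - 1) ^ ((k + 1) * (p - 1)) = (-p) ^ k * ∑ i ∈ range p, x ^ i := by
  obtain ⟨u, hM, huN⟩ := exists_sub_one_pow_pred_eq_geom_sum_add hp hx
  set N := ∑ i ∈ range p, x ^ i
  set M := (x - 1) ^ (p - 1)
  have hMN : M * N = 0 := by
    have hp1 : p - 1 = p - 2 + 1 := by have := hp.two_le; omega
    rw [show M = (x - 1) ^ (p - 2) * (x - 1) by rw [← pow_succ, ← hp1], mul_assoc, mul_geom_sum,
      hx, sub_self, mul_zero]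
  have hMM : M * M = p * u * M := by linear_combination M * hM + hMN
  have hMpow : ∀ j, M ^ (j + 1) = (p * u) ^ j * M := by
    intro j
    induction j with
    | zero => simp
    | succ j ih => rw [pow_succ, ih, mul_assoc, hMM, pow_succ]; ring
  have huN_pow : ∀ j, u ^ j * N = (-1) ^ j * N := by
    intro j
    induction j with
    | zero => simp
    | succ j ih => rw [pow_succ, mul_assoc, huN, pow_succ]; linear_combination -ih
  rw [mul_comm, pow_mul, hMpow, hM]
  linear_combination (p : R) ^ k * huN_pow k + u ^ (k + 1) * hk

theorem sub_one_pow_mul_pred_add_one_eq_zero (hp : p.Prime) (hx : x ^ p = 1) {k : ℕ}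
    (hk : (p : R) ^ (k + 1) = 0) : (x - 1) ^ ((k + 1) * (p - 1) + 1) = 0 := by
  rw [pow_succ, sub_one_pow_mul_pred_eq hp hx hk, mul_assoc, geom_sum_mul, hx, sub_self, mul_zero]

end PowSubOne

theorem natCast_pow_eq_zero_of_algebra_zmod (p k : ℕ) (R : Type*) [Semiring R]
    [Algebra (ZMod (p ^ k)) R] : (p : R) ^ k = 0 := by
  rw [← Nat.cast_pow, ← map_natCast (algebraMap (ZMod (p ^ k)) R), ZMod.natCast_self, map_zero]

theorem SemidirectProduct.right_commutatorElement {N G : Type*} [Group N] [CommGroup G]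
    {ψ : G →* MulAut N} (g h : N ⋊[ψ] G) : ⁅g, h⁆.right = 1 := by
  rw [← rightHom_eq_right, map_commutatorElement, commutatorElement_eq_one_iff_mul_comm]
  exact mul_comm _ _

namespace RegularWreath

section GroupRing

variable (A : Type*) [CommRing A] (p : ℕ) [NeZero p]

/-- `single (-1) 1` rather than `single 1 1`, so that multiplying by it is the shift
`v ↦ v (· + 1)`. -/
noncomputable def shift : AddMonoidAlgebra A (Fin p) := AddMonoidAlgebra.single (-1) 1

theorem shift_pow (j : ℕ) : shift A p ^ j = AddMonoidAlgebra.single (-(j : Fin p)) 1 := by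
  rw [shift, AddMonoidAlgebra.single_pow, one_pow, nsmul_eq_mul, mul_neg_one]

theorem shift_pow_card : shift A p ^ p = 1 := by
  rw [shift_pow, Fin.natCast_self, neg_zero]; rfl

theorem coeff_zero_geom_sum_shift : (∑ i ∈ range p, shift A p ^ i).coeff 0 = 1 := by
  simp only [shift_pow, AddMonoidAlgebra.coeff_sum, AddMonoidAlgebra.coeff_single,
    Finsupp.finsetSum_apply]
  rw [Finset.sum_eq_single_of_mem 0 (mem_range.2 (NeZero.pos p)), Nat.cast_zero, neg_zero,
    Finsupp.single_eq_same]
  intro i hi hi0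
  refine Finsupp.single_eq_of_ne ?_
  rw [ne_eq, zero_eq_neg, Fin.natCast_eq_zero]
  exact fun h => hi0 (Nat.eq_zero_of_dvd_of_lt h (mem_range.1 hi))

noncomputable def equivGroupRing : (Fin p → A) ≃+ AddMonoidAlgebra A (Fin p) :=
  Finsupp.addEquivFunOnFinite.symm.trans AddMonoidAlgebra.coeffAddEquiv.symm

variable {A p}

noncomputable def shiftHom : Multiplicative (ZMod p) →* AddMonoidAlgebra A (Fin p) where
  toFun k := shift A p ^ k.toAdd.val
  map_one' := by simp
  map_mul' a b := by
    simp only [toAdd_mul, ZMod.val_add, ← pow_eq_pow_mod _ (shift_pow_card A p), pow_add]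

theorem shiftHom_apply (c : Multiplicative (ZMod p)) :
    shiftHom c = shift A p ^ c.toAdd.val :=
  rfl

theorem shiftHom_ofAdd_one : shiftHom (.ofAdd (1 : ZMod p)) = shift A p := by
  rw [shiftHom_apply, toAdd_ofAdd, ZMod.val_one_eq_one_mod,
    ← pow_eq_pow_mod _ (shift_pow_card A p), pow_one]

theorem sub_one_dvd_shiftHom_sub_one (c : Multiplicative (ZMod p)) :
    shift A p - 1 ∣ shiftHom c - 1 := by
  simpa [shiftHom_apply] using sub_dvd_pow_sub_pow (shift A p) 1 c.toAdd.val

theorem shift_sub_one_pow_ne_zero (hp : p.Prime) (k : ℕ) :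
    (shift (ZMod (p ^ (k + 1))) p - 1) ^ ((k + 1) * (p - 1)) ≠ 0 := by
  set A := ZMod (p ^ (k + 1))
  rw [sub_one_pow_mul_pred_eq hp (shift_pow_card A p)
    (natCast_pow_eq_zero_of_algebra_zmod p (k + 1) _)]
  intro h
  have hcoeff : ((-(p : A)) ^ k • ∑ i ∈ range p, shift A p ^ i).coeff 0 = 0 := by
    rw [Algebra.smul_def, map_pow, map_neg, map_natCast, h]; rfl
  rw [AddMonoidAlgebra.coeff_smul, Finsupp.smul_apply, coeff_zero_geom_sum_shift, smul_eq_mul,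
    mul_one, neg_pow, neg_one_pow_mul_eq_zero_iff, ← Nat.cast_pow, ZMod.natCast_eq_zero_iff,
    Nat.pow_dvd_pow_iff_le_right hp.one_lt] at hcoeff
  omega

end GroupRing

section Wreath

variable {A : Type*} [CommRing A] {p : ℕ} [NeZero p]

def IsShiftAction (φ : Multiplicative (ZMod p) →* MulAut (Multiplicative (Fin p → A))) :
    Prop :=
  ∀ (k : ZMod p) (v : Fin p → A) (i : Fin p),
    (φ (.ofAdd k) (.ofAdd v)).toAdd i = v (i + Fin.ofNat p k.val)

variable {φ : Multiplicative (ZMod p) →* MulAut (Multiplicative (Fin p → A))}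

noncomputable def coord (g : Multiplicative (Fin p → A) ⋊[φ] Multiplicative (ZMod p)) :
    AddMonoidAlgebra A (Fin p) :=
  equivGroupRing A p g.left.toAdd

@[simp] theorem coord_one :
    coord (1 : Multiplicative (Fin p → A) ⋊[φ] Multiplicative (ZMod p)) = 0 :=
  map_zero _

@[simp] theorem coord_inl (v : Multiplicative (Fin p → A)) :
    coord (SemidirectProduct.inl v : Multiplicative (Fin p → A) ⋊[φ] Multiplicative (ZMod p)) =
      equivGroupRing A p v.toAdd :=
  rfl

@[simp] theorem coord_inr (c : Multiplicative (ZMod p)) :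
    coord (SemidirectProduct.inr c : Multiplicative (Fin p → A) ⋊[φ] Multiplicative (ZMod p)) =
      0 :=
  map_zero _

theorem ext_coord {g h : Multiplicative (Fin p → A) ⋊[φ] Multiplicative (ZMod p)}
    (hr : g.right = h.right) (hc : coord g = coord h) : g = h :=
  SemidirectProduct.ext ((equivGroupRing A p).injective hc) hr

theorem equivGroupRing_act (hφ : IsShiftAction φ) (c : Multiplicative (ZMod p))
    (v : Multiplicative (Fin p → A)) :
    equivGroupRing A p (φ c v).toAdd = shiftHom c * equivGroupRing A p v.toAdd := by
  ext i
  simp only [shiftHom_apply, shift_pow, AddMonoidAlgebra.coeff_single_mul_apply, one_mul,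
    neg_neg]
  exact (hφ c.toAdd v.toAdd i).trans (by rw [Fin.ofNat_eq_cast, add_comm]; rfl)

theorem coord_mul (hφ : IsShiftAction φ)
    (g h : Multiplicative (Fin p → A) ⋊[φ] Multiplicative (ZMod p)) :
    coord (g * h) = coord g + shiftHom g.right * coord h := by
  rw [coord, SemidirectProduct.mul_left, toAdd_mul, map_add, equivGroupRing_act hφ]; rfl

theorem coord_inv (hφ : IsShiftAction φ)
    (g : Multiplicative (Fin p → A) ⋊[φ] Multiplicative (ZMod p)) :
    coord g⁻¹ = -(shiftHom g.right⁻¹ * coord g) := by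
  rw [coord, SemidirectProduct.inv_left, equivGroupRing_act hφ, toAdd_inv, map_neg, mul_neg]; rfl

theorem coord_commutatorElement (hφ : IsShiftAction φ)
    (g h : Multiplicative (Fin p → A) ⋊[φ] Multiplicative (ZMod p)) :
    coord ⁅g, h⁆ = (1 - shiftHom h.right) * coord g + (shiftHom g.right - 1) * coord h := by
  have hinv : ∀ c : Multiplicative (ZMod p),
      shiftHom c⁻¹ * shiftHom c = (1 : AddMonoidAlgebra A (Fin p)) := by
    intro c; rw [← map_mul, inv_mul_cancel, map_one]
  simp only [commutatorElement_def, coord_mul hφ, coord_inv hφ, SemidirectProduct.mul_right,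
    SemidirectProduct.inv_right, map_mul]
  linear_combination (-(shiftHom h.right * coord g) - coord h) * hinv g.right -
    coord h * shiftHom g.right * shiftHom g.right⁻¹ * hinv h.right

variable (φ) in
def augmentationSubgroup (k : ℕ) :
    Subgroup (Multiplicative (Fin p → A) ⋊[φ] Multiplicative (ZMod p)) where
  carrier := {g | g.right = 1 ∧ (shift A p - 1) ^ k ∣ coord g}
  one_mem' := ⟨rfl, by simp⟩
  mul_mem' := by
    rintro a b ⟨ha, hda⟩ ⟨hb, hdb⟩
    refine ⟨by rw [SemidirectProduct.mul_right, ha, hb, mul_one], ?_⟩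
    rw [coord, SemidirectProduct.mul_left, ha, map_one, MulAut.one_apply, toAdd_mul, map_add]
    exact dvd_add hda hdb
  inv_mem' := by
    rintro a ⟨ha, hda⟩
    refine ⟨by rw [SemidirectProduct.inv_right, ha, inv_one], ?_⟩
    rw [coord, SemidirectProduct.inv_left, ha, inv_one, map_one, MulAut.one_apply, toAdd_inv,
      map_neg]
    exact hda.neg_right

theorem augmentationSubgroup_eq_bot {k : ℕ} (hk : (shift A p - 1) ^ k = 0) :
    augmentationSubgroup φ k = ⊥ :=
  (Subgroup.eq_bot_iff_forall _).mpr fun _ ⟨hr, hd⟩ =>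
    ext_coord hr (by rwa [hk, zero_dvd_iff, ← coord_one] at hd)

theorem lowerCentralSeries_succ_le_augmentationSubgroup (hφ : IsShiftAction φ) (k : ℕ) :
    Subgroup.lowerCentralSeries ⊤ (k + 1) ≤ augmentationSubgroup φ (k + 1) := by
  induction k with
  | zero =>
    refine Subgroup.commutator_le.mpr fun g _ h _ =>
      ⟨SemidirectProduct.right_commutatorElement g h, ?_⟩
    rw [coord_commutatorElement hφ, pow_one]
    exact dvd_add (dvd_mul_of_dvd_left (dvd_sub_comm.mp (sub_one_dvd_shiftHom_sub_one _)) _)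
      (dvd_mul_of_dvd_left (sub_one_dvd_shiftHom_sub_one _) _)
  | succ k ih =>
    refine (Subgroup.commutator_mono ih le_rfl).trans (Subgroup.commutator_le.mpr ?_)
    rintro g ⟨hg, hdg⟩ h -
    refine ⟨SemidirectProduct.right_commutatorElement g h, ?_⟩
    rw [coord_commutatorElement hφ, hg, map_one, sub_self, zero_mul, add_zero, pow_succ']
    exact mul_dvd_mul (dvd_sub_comm.mp (sub_one_dvd_shiftHom_sub_one _)) hdg

theorem inl_mem_lowerCentralSeries (hφ : IsShiftAction φ) (k : ℕ) :
    SemidirectProduct.inl (.ofAdd ((equivGroupRing A p).symm ((shift A p - 1) ^ k))) ∈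
      Subgroup.lowerCentralSeries
        (⊤ : Subgroup (Multiplicative (Fin p → A) ⋊[φ] Multiplicative (ZMod p))) k := by
  induction k with
  | zero => exact Subgroup.mem_top _
  | succ k ih =>
    have hmem := Subgroup.commutator_mem_commutator
      (Subgroup.mem_top (SemidirectProduct.inr (.ofAdd (1 : ZMod p)))) ih
    rw [Subgroup.commutator_comm] at hmem
    rw [Subgroup.lowerCentralSeries_succ]
    convert hmem using 1
    apply ext_coord
    · rw [SemidirectProduct.right_commutatorElement]; rfl
    · simp [coord_commutatorElement hφ, shiftHom_ofAdd_one, pow_succ']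

end Wreath

end RegularWreath

open RegularWreath in
theorem nilpotencyClass_wreath_general (p n : ℕ) (hp : p.Prime) (hn : 1 ≤ n)
    [NeZero p]
    (φ : Multiplicative (ZMod p) →* MulAut (Multiplicative (Fin p → ZMod (p ^ n))))
    (hφ : ∀ (k : ZMod p) (v : Fin p → ZMod (p ^ n)) (i : Fin p),
      Multiplicative.toAdd (φ (Multiplicative.ofAdd k) (Multiplicative.ofAdd v)) i =
        v (i + (Fin.ofNat p k.val))) :
    upperCentralSeries
        (SemidirectProduct (Multiplicative (Fin p → ZMod (p ^ n)))
          (Multiplicative (ZMod p)) φ) (n * (p - 1) + 1) = ⊤ ∧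
      upperCentralSeries
        (SemidirectProduct (Multiplicative (Fin p → ZMod (p ^ n)))
          (Multiplicative (ZMod p)) φ) (n * (p - 1)) ≠ ⊤ := by
  obtain ⟨k, rfl⟩ := Nat.exists_eq_add_of_le' hn
  refine ⟨Subgroup.lowerCentralSeries_eq_bot_iff_upperCentralSeries_eq_top.mp ?_,
    fun htop => ?_⟩
  · have hnil := sub_one_pow_mul_pred_add_one_eq_zero hp
      (shift_pow_card (ZMod (p ^ (k + 1))) p) (natCast_pow_eq_zero_of_algebra_zmod p (k + 1) _)
    exact le_bot_iff.mp ((lowerCentralSeries_succ_le_augmentationSubgroup hφ _).trans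
      (augmentationSubgroup_eq_bot hnil).le)
  · have hbot := Subgroup.lowerCentralSeries_eq_bot_iff_upperCentralSeries_eq_top.mpr htop
    have hmem := inl_mem_lowerCentralSeries hφ ((k + 1) * (p - 1))
    rw [hbot, Subgroup.mem_bot, map_eq_one_iff _ SemidirectProduct.inl_injective, ofAdd_eq_one,
      AddEquiv.map_eq_zero_iff] at hmem
    exact shift_sub_one_pow_ne_zero hp k hmem

/-- Let `V = Fin p → ZMod (p ^ n)` and let `φ` be the action of `ZMod p` on `V` in which
`k` acts as the `k`-fold cyclic coordinate shift `σ ^ k` (so that `V ⋊[φ] ZMod p` is the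
regular wreath product `C_{p^n} ≀ C_p`). Then the semidirect product is nilpotent of
nilpotence class exactly `n(p-1)+1`. -/
theorem nilpotencyClass_wreath (p n : ℕ) (hp : p.Prime) (hodd : p ≠ 2) (hn : 1 ≤ n)
    [NeZero p]
    (φ : Multiplicative (ZMod p) →* MulAut (Multiplicative (Fin p → ZMod (p ^ n))))
    (hφ : ∀ (k : ZMod p) (v : Fin p → ZMod (p ^ n)) (i : Fin p),
      Multiplicative.toAdd (φ (Multiplicative.ofAdd k) (Multiplicative.ofAdd v)) i =
        v (i + (Fin.ofNat p k.val))) :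
    upperCentralSeries
        (SemidirectProduct (Multiplicative (Fin p → ZMod (p ^ n)))
          (Multiplicative (ZMod p)) φ) (n * (p - 1) + 1) = ⊤ ∧
      upperCentralSeries
        (SemidirectProduct (Multiplicative (Fin p → ZMod (p ^ n)))
          (Multiplicative (ZMod p)) φ) (n * (p - 1)) ≠ ⊤ :=
  nilpotencyClass_wreath_general p n hp hn φ hφ
end
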